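/- arXiv:gr-qc/0212085 — 3 statements merged into one kernel-verified Lean document; each statement's English description precedes it below -/
import Mathlib

section
/- The conformal Killing–Yano condition is invariant under Hodge duality (flat case): if a smooth 2-form field A on ℝ⁴ satisfies the flat conformal Killing–Yano equation, then the pointwise Hodge dual field x ↦ *(A(x)) also satisfies the flat conformal Killing–Yano equation. -/
open Matrix Real

/-- Spacetime `ℝ⁴` with the standard basis. -/
abbrev V4 : Type := Fin 4 → ℝ

/-- `4×4` real matrices: components of bilinear forms / endomorphisms of `ℝ⁴`
in the standard basis `(e₀,e₁,e₂,e₃)`. -/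
abbrev Mat4 : Type := Matrix (Fin 4) (Fin 4) ℝ

/-- The Minkowski metric `diag(-1,1,1,1)` (it equals its own inverse). -/
noncomputable def ηm : Mat4 := Matrix.diagonal ![-1, 1, 1, 1]

/-- The Minkowski bilinear form `η(x,y) = -x₀y₀ + x₁y₁ + x₂y₂ + x₃y₃`. -/
noncomputable def ηb (x y : V4) : ℝ := x ⬝ᵥ ηm *ᵥ y

/-- A vector `x` is timelike if `η(x,x) < 0`. -/
noncomputable def Timelike (x : V4) : Prop := ηb x x < 0

/-- Evaluation of the bilinear form with component matrix `B`:
`B(x,y) = Σ xᵅ B_{αβ} yᵝ`. -/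
noncomputable def bil (B : Mat4) (x y : V4) : ℝ := x ⬝ᵥ B *ᵥ y

/-- A 2-form is a skew-symmetric bilinear form. -/
noncomputable def IsTwoForm (B : Mat4) : Prop := Bᵀ = -B

/-- The endomorphism `B̂` associated with the bilinear form `B`, i.e. the unique
endomorphism with `η(B̂x, y) = B(x,y)` for all `x, y`.  (Indeed
`ηb (hat B *ᵥ x) y = bil B x y`.) -/
noncomputable def hat (B : Mat4) : Mat4 := ηm * Bᵀ

/-- The totally antisymmetric Levi-Civita symbol on four indices, `ε₀₁₂₃ = 1`. -/
noncomputable def lc (a b c d : Fin 4) : ℝ :=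
  (((b : ℕ) : ℝ) - ((a : ℕ) : ℝ)) * (((c : ℕ) : ℝ) - ((a : ℕ) : ℝ)) *
    (((d : ℕ) : ℝ) - ((a : ℕ) : ℝ)) * (((c : ℕ) : ℝ) - ((b : ℕ) : ℝ)) *
    (((d : ℕ) : ℝ) - ((b : ℕ) : ℝ)) * (((d : ℕ) : ℝ) - ((c : ℕ) : ℝ)) / 12

/-- The Hodge dual of a 2-form:
`(*F)(e_α,e_β) = (1/2) Σ ε_{αβγδ} η^{γμ} η^{δν} F(e_μ,e_ν)`. -/
noncomputable def hodge (F : Mat4) : Mat4 :=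
  Matrix.of fun α β => (1/2) * ∑ γ, ∑ δ, ∑ μ, ∑ ν, lc α β γ δ * ηm γ μ * ηm δ ν * F μ ν

/-- A unitary 2-form: `tr(Û∘Û) = 2` and `tr(Û∘(*U)̂) = 0`. -/
noncomputable def IsUnitary (U : Mat4) : Prop :=
  IsTwoForm U ∧ (hat U * hat U).trace = 2 ∧ (hat U * hat (hodge U)).trace = 0

/-- An endomorphism `L` is η-self-adjoint if `η(Lx,y) = η(x,Ly)` for all `x, y`. -/
noncomputable def SelfAdj (L : Mat4) : Prop := ∀ x y : V4, ηb (L *ᵥ x) y = ηb x (L *ᵥ y)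

/-- The standard basis vector `e_i` of `ℝ⁴`. -/
noncomputable def e (i : Fin 4) : V4 := Pi.single i 1

/-- The directional derivative `(D_u A)(x)` of a bilinear-form-valued field `A`
at the point `x` in the direction `u` (computed entrywise). -/
noncomputable def Dd (A : V4 → Mat4) (x u : V4) : Mat4 :=
  Matrix.of fun i j => fderiv ℝ (fun y => A y i j) x u

/-- A smooth 2-form field: a smooth map from `ℝ⁴` to the space of
skew-symmetric bilinear forms on `ℝ⁴`. -/
noncomputable def SmoothTwoFormField (A : V4 → Mat4) : Prop :=
  (∀ x, (A x)ᵀ = -(A x)) ∧ ∀ i j, ContDiff ℝ (⊤ : ℕ∞) (fun x => A x i j)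

/-- The flat Killing–Yano equation: `(D_uA)(x)(v,z) + (D_vA)(x)(u,z) = 0`. -/
noncomputable def FlatKY (A : V4 → Mat4) : Prop :=
  ∀ x u v z : V4, bil (Dd A x u) v z + bil (Dd A x v) u z = 0

/-- The codifferential `(δA)(x)(z) = -Σ η^{αβ} (D_{e_α}A)(x)(e_β, z)`. -/
noncomputable def codiff (A : V4 → Mat4) (x z : V4) : ℝ :=
  -∑ α, ∑ β, ηm α β * bil (Dd A x (e α)) (e β) z

/-- The exterior derivative
`(dA)(x)(u,v,w) = (D_uA)(x)(v,w) + (D_vA)(x)(w,u) + (D_wA)(x)(u,v)`. -/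
noncomputable def extd (A : V4 → Mat4) (x u v w : V4) : ℝ :=
  bil (Dd A x u) v w + bil (Dd A x v) w u + bil (Dd A x w) u v

/-- The flat conformal Killing–Yano equation:
`(D_uA)(x)(v,z) + (D_vA)(x)(u,z) = 2η(u,v)a(x)(z) - a(x)(u)η(v,z) - a(x)(v)η(u,z)`
with `a = -(1/3)δA`. -/
noncomputable def FlatCKY (A : V4 → Mat4) : Prop :=
  ∀ x u v z : V4, bil (Dd A x u) v z + bil (Dd A x v) u z =
    2 * ηb u v * (-(1/3) * codiff A x z) - (-(1/3) * codiff A x u) * ηb v z -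
      (-(1/3) * codiff A x v) * ηb u z

/-- The interior contraction of a 1-form `ω` with a 2-form `G`:
`(i(ω)G)(z) = Σ η^{αβ} ω(e_α) G(e_β, z)`. -/
noncomputable def icontr (ω : V4 → ℝ) (G : Mat4) (z : V4) : ℝ :=
  ∑ α, ∑ β, ηm α β * ω (e α) * bil G (e β) z

/- ===== auxiliary lemmas ===== -/

lemma my_bil_basis (M : Mat4) (i j : Fin 4) : bil M (e i) (e j) = M i j := by
  simp [bil, e, Matrix.mulVec_single, single_dotProduct]

lemma my_etab_basis (i j : Fin 4) : ηb (e i) (e j) = ηm i j := my_bil_basis ηm i j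

lemma my_clm (L : V4 →L[ℝ] ℝ) (u : V4) : L u = ∑ i, u i * L (e i) := by
  have hu : (∑ i, u i • e i) = u := by
    funext j
    simp [e, Pi.single_apply, Finset.sum_ite_eq']
  conv_lhs => rw [← hu]
  rw [map_sum]
  simp [smul_eq_mul]

lemma my_bil_expand (M : Mat4) (v z : V4) : bil M v z = ∑ j, ∑ k, v j * z k * M j k := by
  simp [bil, dotProduct, mulVec, Finset.mul_sum]
  exact Finset.sum_congr rfl fun j _ => Finset.sum_congr rfl fun k _ => by ring

lemma my_bil_single_left (M : Mat4) (β : Fin 4) (z : V4) :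
    bil M (e β) z = ∑ k, z k * M β k := by
  unfold bil e
  rw [single_dotProduct]
  simp only [one_mul, mulVec, dotProduct]
  exact Finset.sum_congr rfl fun k _ => by ring

lemma my_eta_expand (u v : V4) : ηb u v = ∑ i, ∑ j, u i * v j * ηm i j :=
  my_bil_expand ηm u v

lemma my_codiff_lin (B : V4 → Mat4) (x z : V4) :
    codiff B x z = ∑ k, z k * codiff B x (e k) := by
  simp only [codiff, my_bil_basis]
  simp only [my_bil_single_left]
  simp only [Fin.sum_univ_four]
  ring

lemma my_Dd_entry_expand (B : V4 → Mat4) (x u : V4) (j k : Fin 4) :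
    (Dd B x u) j k = ∑ i, u i * (Dd B x (e i)) j k :=
  my_clm (fderiv ℝ (fun y => B y j k) x) u

lemma my_L1 (B : V4 → Mat4) (x u v z : V4) :
    bil (Dd B x u) v z = ∑ i, ∑ j, ∑ k, u i * v j * z k * (Dd B x (e i)) j k := by
  rw [my_bil_expand]
  simp only [my_Dd_entry_expand B x u]
  simp only [Fin.sum_univ_four]
  ring

set_option maxHeartbeats 4000000 in
lemma hodge_eq (F : Mat4) : hodge F =
    !![0, (F 2 3 - F 3 2)/2, (F 3 1 - F 1 3)/2, (F 1 2 - F 2 1)/2;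
       (F 3 2 - F 2 3)/2, 0, (F 3 0 - F 0 3)/2, (F 0 2 - F 2 0)/2;
       (F 1 3 - F 3 1)/2, (F 0 3 - F 3 0)/2, 0, (F 1 0 - F 0 1)/2;
       (F 2 1 - F 1 2)/2, (F 2 0 - F 0 2)/2, (F 0 1 - F 1 0)/2, 0] := by
  ext i j
  fin_cases i <;> fin_cases j <;>
  · simp only [hodge, Matrix.of_apply, Fin.sum_univ_four, lc, ηm, Matrix.diagonal_apply,
      show ((0:Fin 4):ℕ) = 0 from rfl, show ((1:Fin 4):ℕ) = 1 from rfl,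
      show ((2:Fin 4):ℕ) = 2 from rfl, show ((3:Fin 4):ℕ) = 3 from rfl]
    norm_num [Fin.ext_iff]
    try simp +decide [Matrix.cons_val', Matrix.cons_val_zero, Matrix.cons_val_one]
    try ring

lemma my_hd00 (F : Mat4) : hodge F 0 0 = 0 := by rw [hodge_eq]; norm_num
lemma my_hd01 (F : Mat4) : hodge F 0 1 = (F 2 3 - F 3 2)/2 := by rw [hodge_eq]; norm_num
lemma my_hd02 (F : Mat4) : hodge F 0 2 = (F 3 1 - F 1 3)/2 := by rw [hodge_eq]; norm_num <;> rfl
lemma my_hd03 (F : Mat4) : hodge F 0 3 = (F 1 2 - F 2 1)/2 := by rw [hodge_eq]; norm_num <;> rfl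
lemma my_hd10 (F : Mat4) : hodge F 1 0 = (F 3 2 - F 2 3)/2 := by rw [hodge_eq]; norm_num
lemma my_hd11 (F : Mat4) : hodge F 1 1 = 0 := by rw [hodge_eq]; norm_num
lemma my_hd12 (F : Mat4) : hodge F 1 2 = (F 3 0 - F 0 3)/2 := by rw [hodge_eq]; norm_num <;> rfl
lemma my_hd13 (F : Mat4) : hodge F 1 3 = (F 0 2 - F 2 0)/2 := by rw [hodge_eq]; norm_num <;> rfl
lemma my_hd20 (F : Mat4) : hodge F 2 0 = (F 1 3 - F 3 1)/2 := by rw [hodge_eq]; norm_num <;> rfl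
lemma my_hd21 (F : Mat4) : hodge F 2 1 = (F 0 3 - F 3 0)/2 := by rw [hodge_eq]; norm_num <;> rfl
lemma my_hd22 (F : Mat4) : hodge F 2 2 = 0 := by rw [hodge_eq]; norm_num <;> rfl
lemma my_hd23 (F : Mat4) : hodge F 2 3 = (F 1 0 - F 0 1)/2 := by rw [hodge_eq]; norm_num <;> rfl
lemma my_hd30 (F : Mat4) : hodge F 3 0 = (F 2 1 - F 1 2)/2 := by rw [hodge_eq]; norm_num <;> rfl
lemma my_hd31 (F : Mat4) : hodge F 3 1 = (F 2 0 - F 0 2)/2 := by rw [hodge_eq]; norm_num <;> rfl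
lemma my_hd32 (F : Mat4) : hodge F 3 2 = (F 0 1 - F 1 0)/2 := by rw [hodge_eq]; norm_num <;> rfl
lemma my_hd33 (F : Mat4) : hodge F 3 3 = 0 := by rw [hodge_eq]; norm_num <;> rfl
lemma my_eta00 : ηm 0 0 = -1 := by rw [show (ηm 0 0 : ℝ) = ![(-1:ℝ),1,1,1] 0 from Matrix.diagonal_apply_eq _ _]; norm_num
lemma my_eta01 : ηm 0 1 = 0 := by rw [ηm]; exact Matrix.diagonal_apply_ne _ (by decide)
lemma my_eta02 : ηm 0 2 = 0 := by rw [ηm]; exact Matrix.diagonal_apply_ne _ (by decide)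
lemma my_eta03 : ηm 0 3 = 0 := by rw [ηm]; exact Matrix.diagonal_apply_ne _ (by decide)
lemma my_eta10 : ηm 1 0 = 0 := by rw [ηm]; exact Matrix.diagonal_apply_ne _ (by decide)
lemma my_eta11 : ηm 1 1 = 1 := by rw [show (ηm 1 1 : ℝ) = ![(-1:ℝ),1,1,1] 1 from Matrix.diagonal_apply_eq _ _]; norm_num
lemma my_eta12 : ηm 1 2 = 0 := by rw [ηm]; exact Matrix.diagonal_apply_ne _ (by decide)
lemma my_eta13 : ηm 1 3 = 0 := by rw [ηm]; exact Matrix.diagonal_apply_ne _ (by decide)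
lemma my_eta20 : ηm 2 0 = 0 := by rw [ηm]; exact Matrix.diagonal_apply_ne _ (by decide)
lemma my_eta21 : ηm 2 1 = 0 := by rw [ηm]; exact Matrix.diagonal_apply_ne _ (by decide)
lemma my_eta22 : ηm 2 2 = 1 := by rw [show (ηm 2 2 : ℝ) = ![(-1:ℝ),1,1,1] 2 from Matrix.diagonal_apply_eq _ _]; norm_num <;> rfl
lemma my_eta23 : ηm 2 3 = 0 := by rw [ηm]; exact Matrix.diagonal_apply_ne _ (by decide)
lemma my_eta30 : ηm 3 0 = 0 := by rw [ηm]; exact Matrix.diagonal_apply_ne _ (by decide)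
lemma my_eta31 : ηm 3 1 = 0 := by rw [ηm]; exact Matrix.diagonal_apply_ne _ (by decide)
lemma my_eta32 : ηm 3 2 = 0 := by rw [ηm]; exact Matrix.diagonal_apply_ne _ (by decide)
lemma my_eta33 : ηm 3 3 = 1 := by rw [show (ηm 3 3 : ℝ) = ![(-1:ℝ),1,1,1] 3 from Matrix.diagonal_apply_eq _ _]; norm_num <;> rfl

lemma my_mk0 (h : (0:ℕ) < 4) : (⟨0, h⟩ : Fin 4) = 0 := rfl
lemma my_mk1 (h : (1:ℕ) < 4) : (⟨1, h⟩ : Fin 4) = 1 := rfl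
lemma my_mk2 (h : (2:ℕ) < 4) : (⟨2, h⟩ : Fin 4) = 2 := rfl
lemma my_mk3 (h : (3:ℕ) < 4) : (⟨3, h⟩ : Fin 4) = 3 := rfl

set_option maxHeartbeats 2000000 in
lemma my_key (s : Fin 4 → Mat4)
    (hskew : ∀ α i j : Fin 4, s α j i = - s α i j)
    (a : Fin 4 → ℝ)
    (h : ∀ i j k : Fin 4, s i j k + s j i k =
      2 * ηm i j * a k - a i * ηm j k - a j * ηm i k)
    (b : Fin 4 → ℝ)
    (hb : ∀ k : Fin 4, b k = (1/3) * (-(hodge (s 0) 0 k) + hodge (s 1) 1 k +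
      hodge (s 2) 2 k + hodge (s 3) 3 k)) :
    ∀ i j k : Fin 4, hodge (s i) j k + hodge (s j) i k =
      2 * ηm i j * b k - b i * ηm j k - b j * ηm i k := by
  have H001 := h 0 0 1
  have H002 := h 0 0 2
  have H003 := h 0 0 3
  have H011 := h 0 1 1
  have H012 := h 0 1 2
  have H013 := h 0 1 3
  have H021 := h 0 2 1
  have H022 := h 0 2 2
  have H023 := h 0 2 3
  have H031 := h 0 3 1
  have H032 := h 0 3 2
  have H033 := h 0 3 3
  have H110 := h 1 1 0
  have H112 := h 1 1 2
  have H113 := h 1 1 3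
  have H120 := h 1 2 0
  have H122 := h 1 2 2
  have H123 := h 1 2 3
  have H130 := h 1 3 0
  have H132 := h 1 3 2
  have H133 := h 1 3 3
  have H220 := h 2 2 0
  have H221 := h 2 2 1
  have H223 := h 2 2 3
  have H230 := h 2 3 0
  have H231 := h 2 3 1
  have H233 := h 2 3 3
  have H330 := h 3 3 0
  have H331 := h 3 3 1
  have H332 := h 3 3 2
  simp only [my_eta00, my_eta01, my_eta02, my_eta03, my_eta10, my_eta11, my_eta12, my_eta13, my_eta20, my_eta21, my_eta22, my_eta23, my_eta30, my_eta31, my_eta32, my_eta33] at H001 H002 H003 H011 H012 H013 H021 H022 H023 H031 H032 H033 H110 H112 H113 H120 H122 H123 H130 H132 H133 H220 H221 H223 H230 H231 H233 H330 H331 H332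
  have B0 := hb 0
  have B1 := hb 1
  have B2 := hb 2
  have B3 := hb 3
  simp only [my_hd00, my_hd01, my_hd02, my_hd03, my_hd10, my_hd11, my_hd12, my_hd13, my_hd20, my_hd21, my_hd22, my_hd23, my_hd30, my_hd31, my_hd32, my_hd33] at B0 B1 B2 B3
  intro i j k
  fin_cases i <;> fin_cases j <;> fin_cases k
  · simp only [my_mk0, my_mk1, my_mk2, my_mk3, my_hd00, my_hd01, my_hd02, my_hd03, my_hd10, my_hd11, my_hd12, my_hd13, my_hd20, my_hd21, my_hd22, my_hd23, my_hd30, my_hd31, my_hd32, my_hd33, my_eta00, my_eta01, my_eta02, my_eta03, my_eta10, my_eta11, my_eta12, my_eta13, my_eta20, my_eta21, my_eta22, my_eta23, my_eta30, my_eta31, my_eta32, my_eta33]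
    linear_combination (0 : ℝ) * B0
  · simp only [my_mk0, my_mk1, my_mk2, my_mk3, my_hd00, my_hd01, my_hd02, my_hd03, my_hd10, my_hd11, my_hd12, my_hd13, my_hd20, my_hd21, my_hd22, my_hd23, my_hd30, my_hd31, my_hd32, my_hd33, my_eta00, my_eta01, my_eta02, my_eta03, my_eta10, my_eta11, my_eta12, my_eta13, my_eta20, my_eta21, my_eta22, my_eta23, my_eta30, my_eta31, my_eta32, my_eta33]
    linear_combination (1) * H023 + (-1/3) * H032 + (1/3) * H230 + (-1/3) * hskew 0 2 3 + (-2/3) * hskew 2 0 3 + (2) * B1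
  · simp only [my_mk0, my_mk1, my_mk2, my_mk3, my_hd00, my_hd01, my_hd02, my_hd03, my_hd10, my_hd11, my_hd12, my_hd13, my_hd20, my_hd21, my_hd22, my_hd23, my_hd30, my_hd31, my_hd32, my_hd33, my_eta00, my_eta01, my_eta02, my_eta03, my_eta10, my_eta11, my_eta12, my_eta13, my_eta20, my_eta21, my_eta22, my_eta23, my_eta30, my_eta31, my_eta32, my_eta33]
    linear_combination (-1) * H013 + (1/3) * H031 + (-1/3) * H130 + (1/3) * hskew 0 1 3 + (2/3) * hskew 1 0 3 + (2) * B2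
  · simp only [my_mk0, my_mk1, my_mk2, my_mk3, my_hd00, my_hd01, my_hd02, my_hd03, my_hd10, my_hd11, my_hd12, my_hd13, my_hd20, my_hd21, my_hd22, my_hd23, my_hd30, my_hd31, my_hd32, my_hd33, my_eta00, my_eta01, my_eta02, my_eta03, my_eta10, my_eta11, my_eta12, my_eta13, my_eta20, my_eta21, my_eta22, my_eta23, my_eta30, my_eta31, my_eta32, my_eta33]
    linear_combination (1) * H012 + (-1/3) * H021 + (1/3) * H120 + (-1/3) * hskew 0 1 2 + (-2/3) * hskew 1 0 2 + (2) * B3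
  · simp only [my_mk0, my_mk1, my_mk2, my_mk3, my_hd00, my_hd01, my_hd02, my_hd03, my_hd10, my_hd11, my_hd12, my_hd13, my_hd20, my_hd21, my_hd22, my_hd23, my_hd30, my_hd31, my_hd32, my_hd33, my_eta00, my_eta01, my_eta02, my_eta03, my_eta10, my_eta11, my_eta12, my_eta13, my_eta20, my_eta21, my_eta22, my_eta23, my_eta30, my_eta31, my_eta32, my_eta33]
    linear_combination (-1/2) * H023 + (1/6) * H032 + (-1/6) * H230 + (1/6) * hskew 0 2 3 + (1/3) * hskew 2 0 3 + (-1) * B1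
  · simp only [my_mk0, my_mk1, my_mk2, my_mk3, my_hd00, my_hd01, my_hd02, my_hd03, my_hd10, my_hd11, my_hd12, my_hd13, my_hd20, my_hd21, my_hd22, my_hd23, my_hd30, my_hd31, my_hd32, my_hd33, my_eta00, my_eta01, my_eta02, my_eta03, my_eta10, my_eta11, my_eta12, my_eta13, my_eta20, my_eta21, my_eta22, my_eta23, my_eta30, my_eta31, my_eta32, my_eta33]
    linear_combination (1/2) * H123 + (-1/6) * H132 + (1/6) * H231 + (-1/6) * hskew 1 2 3 + (-1/3) * hskew 2 1 3 + (1) * B0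
  · simp only [my_mk0, my_mk1, my_mk2, my_mk3, my_hd00, my_hd01, my_hd02, my_hd03, my_hd10, my_hd11, my_hd12, my_hd13, my_hd20, my_hd21, my_hd22, my_hd23, my_hd30, my_hd31, my_hd32, my_hd33, my_eta00, my_eta01, my_eta02, my_eta03, my_eta10, my_eta11, my_eta12, my_eta13, my_eta20, my_eta21, my_eta22, my_eta23, my_eta30, my_eta31, my_eta32, my_eta33]
    linear_combination (-1/2) * H003 + (-1/2) * H113 + (1/2) * hskew 0 0 3 + (1/2) * hskew 1 1 3
  · simp only [my_mk0, my_mk1, my_mk2, my_mk3, my_hd00, my_hd01, my_hd02, my_hd03, my_hd10, my_hd11, my_hd12, my_hd13, my_hd20, my_hd21, my_hd22, my_hd23, my_hd30, my_hd31, my_hd32, my_hd33, my_eta00, my_eta01, my_eta02, my_eta03, my_eta10, my_eta11, my_eta12, my_eta13, my_eta20, my_eta21, my_eta22, my_eta23, my_eta30, my_eta31, my_eta32, my_eta33]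
    linear_combination (1/2) * H002 + (1/2) * H112 + (-1/2) * hskew 0 0 2 + (-1/2) * hskew 1 1 2
  · simp only [my_mk0, my_mk1, my_mk2, my_mk3, my_hd00, my_hd01, my_hd02, my_hd03, my_hd10, my_hd11, my_hd12, my_hd13, my_hd20, my_hd21, my_hd22, my_hd23, my_hd30, my_hd31, my_hd32, my_hd33, my_eta00, my_eta01, my_eta02, my_eta03, my_eta10, my_eta11, my_eta12, my_eta13, my_eta20, my_eta21, my_eta22, my_eta23, my_eta30, my_eta31, my_eta32, my_eta33]
    linear_combination (1/2) * H013 + (-1/6) * H031 + (1/6) * H130 + (-1/6) * hskew 0 1 3 + (-1/3) * hskew 1 0 3 + (-1) * B2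
  · simp only [my_mk0, my_mk1, my_mk2, my_mk3, my_hd00, my_hd01, my_hd02, my_hd03, my_hd10, my_hd11, my_hd12, my_hd13, my_hd20, my_hd21, my_hd22, my_hd23, my_hd30, my_hd31, my_hd32, my_hd33, my_eta00, my_eta01, my_eta02, my_eta03, my_eta10, my_eta11, my_eta12, my_eta13, my_eta20, my_eta21, my_eta22, my_eta23, my_eta30, my_eta31, my_eta32, my_eta33]
    linear_combination (1/2) * H003 + (1/2) * H223 + (-1/2) * hskew 0 0 3 + (-1/2) * hskew 2 2 3
  · simp only [my_mk0, my_mk1, my_mk2, my_mk3, my_hd00, my_hd01, my_hd02, my_hd03, my_hd10, my_hd11, my_hd12, my_hd13, my_hd20, my_hd21, my_hd22, my_hd23, my_hd30, my_hd31, my_hd32, my_hd33, my_eta00, my_eta01, my_eta02, my_eta03, my_eta10, my_eta11, my_eta12, my_eta13, my_eta20, my_eta21, my_eta22, my_eta23, my_eta30, my_eta31, my_eta32, my_eta33]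
    linear_combination (-1/2) * H123 + (-1/6) * H132 + (1/6) * H231 + (1/3) * hskew 1 2 3 + (1/6) * hskew 2 1 3 + (1) * B0
  · simp only [my_mk0, my_mk1, my_mk2, my_mk3, my_hd00, my_hd01, my_hd02, my_hd03, my_hd10, my_hd11, my_hd12, my_hd13, my_hd20, my_hd21, my_hd22, my_hd23, my_hd30, my_hd31, my_hd32, my_hd33, my_eta00, my_eta01, my_eta02, my_eta03, my_eta10, my_eta11, my_eta12, my_eta13, my_eta20, my_eta21, my_eta22, my_eta23, my_eta30, my_eta31, my_eta32, my_eta33]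
    linear_combination (-1/2) * H001 + (1/2) * H122 + (-1/4) * H221 + (1/2) * hskew 0 0 1 + (-1/4) * hskew 1 2 2
  · simp only [my_mk0, my_mk1, my_mk2, my_mk3, my_hd00, my_hd01, my_hd02, my_hd03, my_hd10, my_hd11, my_hd12, my_hd13, my_hd20, my_hd21, my_hd22, my_hd23, my_hd30, my_hd31, my_hd32, my_hd33, my_eta00, my_eta01, my_eta02, my_eta03, my_eta10, my_eta11, my_eta12, my_eta13, my_eta20, my_eta21, my_eta22, my_eta23, my_eta30, my_eta31, my_eta32, my_eta33]
    linear_combination (-1/2) * H012 + (1/6) * H021 + (-1/6) * H120 + (1/6) * hskew 0 1 2 + (1/3) * hskew 1 0 2 + (-1) * B3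
  · simp only [my_mk0, my_mk1, my_mk2, my_mk3, my_hd00, my_hd01, my_hd02, my_hd03, my_hd10, my_hd11, my_hd12, my_hd13, my_hd20, my_hd21, my_hd22, my_hd23, my_hd30, my_hd31, my_hd32, my_hd33, my_eta00, my_eta01, my_eta02, my_eta03, my_eta10, my_eta11, my_eta12, my_eta13, my_eta20, my_eta21, my_eta22, my_eta23, my_eta30, my_eta31, my_eta32, my_eta33]
    linear_combination (-1/2) * H002 + (1/2) * H233 + (-1/4) * H332 + (1/2) * hskew 0 0 2 + (-1/4) * hskew 2 3 3
  · simp only [my_mk0, my_mk1, my_mk2, my_mk3, my_hd00, my_hd01, my_hd02, my_hd03, my_hd10, my_hd11, my_hd12, my_hd13, my_hd20, my_hd21, my_hd22, my_hd23, my_hd30, my_hd31, my_hd32, my_hd33, my_eta00, my_eta01, my_eta02, my_eta03, my_eta10, my_eta11, my_eta12, my_eta13, my_eta20, my_eta21, my_eta22, my_eta23, my_eta30, my_eta31, my_eta32, my_eta33]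
    linear_combination (1/2) * H001 + (-1/2) * H133 + (1/4) * H331 + (-1/2) * hskew 0 0 1 + (1/4) * hskew 1 3 3
  · simp only [my_mk0, my_mk1, my_mk2, my_mk3, my_hd00, my_hd01, my_hd02, my_hd03, my_hd10, my_hd11, my_hd12, my_hd13, my_hd20, my_hd21, my_hd22, my_hd23, my_hd30, my_hd31, my_hd32, my_hd33, my_eta00, my_eta01, my_eta02, my_eta03, my_eta10, my_eta11, my_eta12, my_eta13, my_eta20, my_eta21, my_eta22, my_eta23, my_eta30, my_eta31, my_eta32, my_eta33]
    linear_combination (1/3) * H132 + (-1/3) * H231 + (-1/6) * hskew 1 2 3 + (1/6) * hskew 2 1 3 + (1) * B0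
  · simp only [my_mk0, my_mk1, my_mk2, my_mk3, my_hd00, my_hd01, my_hd02, my_hd03, my_hd10, my_hd11, my_hd12, my_hd13, my_hd20, my_hd21, my_hd22, my_hd23, my_hd30, my_hd31, my_hd32, my_hd33, my_eta00, my_eta01, my_eta02, my_eta03, my_eta10, my_eta11, my_eta12, my_eta13, my_eta20, my_eta21, my_eta22, my_eta23, my_eta30, my_eta31, my_eta32, my_eta33]
    linear_combination (-1/2) * H023 + (1/6) * H032 + (-1/6) * H230 + (1/6) * hskew 0 2 3 + (1/3) * hskew 2 0 3 + (-1) * B1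
  · simp only [my_mk0, my_mk1, my_mk2, my_mk3, my_hd00, my_hd01, my_hd02, my_hd03, my_hd10, my_hd11, my_hd12, my_hd13, my_hd20, my_hd21, my_hd22, my_hd23, my_hd30, my_hd31, my_hd32, my_hd33, my_eta00, my_eta01, my_eta02, my_eta03, my_eta10, my_eta11, my_eta12, my_eta13, my_eta20, my_eta21, my_eta22, my_eta23, my_eta30, my_eta31, my_eta32, my_eta33]
    linear_combination (1/2) * H123 + (-1/6) * H132 + (1/6) * H231 + (-1/6) * hskew 1 2 3 + (-1/3) * hskew 2 1 3 + (1) * B0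
  · simp only [my_mk0, my_mk1, my_mk2, my_mk3, my_hd00, my_hd01, my_hd02, my_hd03, my_hd10, my_hd11, my_hd12, my_hd13, my_hd20, my_hd21, my_hd22, my_hd23, my_hd30, my_hd31, my_hd32, my_hd33, my_eta00, my_eta01, my_eta02, my_eta03, my_eta10, my_eta11, my_eta12, my_eta13, my_eta20, my_eta21, my_eta22, my_eta23, my_eta30, my_eta31, my_eta32, my_eta33]
    linear_combination (-1/2) * H003 + (-1/2) * H113 + (1/2) * hskew 0 0 3 + (1/2) * hskew 1 1 3
  · simp only [my_mk0, my_mk1, my_mk2, my_mk3, my_hd00, my_hd01, my_hd02, my_hd03, my_hd10, my_hd11, my_hd12, my_hd13, my_hd20, my_hd21, my_hd22, my_hd23, my_hd30, my_hd31, my_hd32, my_hd33, my_eta00, my_eta01, my_eta02, my_eta03, my_eta10, my_eta11, my_eta12, my_eta13, my_eta20, my_eta21, my_eta22, my_eta23, my_eta30, my_eta31, my_eta32, my_eta33]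
    linear_combination (1/2) * H002 + (1/2) * H112 + (-1/2) * hskew 0 0 2 + (-1/2) * hskew 1 1 2
  · simp only [my_mk0, my_mk1, my_mk2, my_mk3, my_hd00, my_hd01, my_hd02, my_hd03, my_hd10, my_hd11, my_hd12, my_hd13, my_hd20, my_hd21, my_hd22, my_hd23, my_hd30, my_hd31, my_hd32, my_hd33, my_eta00, my_eta01, my_eta02, my_eta03, my_eta10, my_eta11, my_eta12, my_eta13, my_eta20, my_eta21, my_eta22, my_eta23, my_eta30, my_eta31, my_eta32, my_eta33]
    linear_combination (-1) * H123 + (1/3) * H132 + (-1/3) * H231 + (1/3) * hskew 1 2 3 + (2/3) * hskew 2 1 3 + (-2) * B0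
  · simp only [my_mk0, my_mk1, my_mk2, my_mk3, my_hd00, my_hd01, my_hd02, my_hd03, my_hd10, my_hd11, my_hd12, my_hd13, my_hd20, my_hd21, my_hd22, my_hd23, my_hd30, my_hd31, my_hd32, my_hd33, my_eta00, my_eta01, my_eta02, my_eta03, my_eta10, my_eta11, my_eta12, my_eta13, my_eta20, my_eta21, my_eta22, my_eta23, my_eta30, my_eta31, my_eta32, my_eta33]
    linear_combination (0 : ℝ) * B0
  · simp only [my_mk0, my_mk1, my_mk2, my_mk3, my_hd00, my_hd01, my_hd02, my_hd03, my_hd10, my_hd11, my_hd12, my_hd13, my_hd20, my_hd21, my_hd22, my_hd23, my_hd30, my_hd31, my_hd32, my_hd33, my_eta00, my_eta01, my_eta02, my_eta03, my_eta10, my_eta11, my_eta12, my_eta13, my_eta20, my_eta21, my_eta22, my_eta23, my_eta30, my_eta31, my_eta32, my_eta33]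
    linear_combination (-1) * H013 + (-1/3) * H031 + (1/3) * H130 + (2/3) * hskew 0 1 3 + (1/3) * hskew 1 0 3 + (-2) * B2
  · simp only [my_mk0, my_mk1, my_mk2, my_mk3, my_hd00, my_hd01, my_hd02, my_hd03, my_hd10, my_hd11, my_hd12, my_hd13, my_hd20, my_hd21, my_hd22, my_hd23, my_hd30, my_hd31, my_hd32, my_hd33, my_eta00, my_eta01, my_eta02, my_eta03, my_eta10, my_eta11, my_eta12, my_eta13, my_eta20, my_eta21, my_eta22, my_eta23, my_eta30, my_eta31, my_eta32, my_eta33]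
    linear_combination (1) * H012 + (1/3) * H021 + (-1/3) * H120 + (-2/3) * hskew 0 1 2 + (-1/3) * hskew 1 0 2 + (-2) * B3
  · simp only [my_mk0, my_mk1, my_mk2, my_mk3, my_hd00, my_hd01, my_hd02, my_hd03, my_hd10, my_hd11, my_hd12, my_hd13, my_hd20, my_hd21, my_hd22, my_hd23, my_hd30, my_hd31, my_hd32, my_hd33, my_eta00, my_eta01, my_eta02, my_eta03, my_eta10, my_eta11, my_eta12, my_eta13, my_eta20, my_eta21, my_eta22, my_eta23, my_eta30, my_eta31, my_eta32, my_eta33]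
    linear_combination (1/2) * H113 + (-1/2) * H223 + (-1/2) * hskew 1 1 3 + (1/2) * hskew 2 2 3
  · simp only [my_mk0, my_mk1, my_mk2, my_mk3, my_hd00, my_hd01, my_hd02, my_hd03, my_hd10, my_hd11, my_hd12, my_hd13, my_hd20, my_hd21, my_hd22, my_hd23, my_hd30, my_hd31, my_hd32, my_hd33, my_eta00, my_eta01, my_eta02, my_eta03, my_eta10, my_eta11, my_eta12, my_eta13, my_eta20, my_eta21, my_eta22, my_eta23, my_eta30, my_eta31, my_eta32, my_eta33]
    linear_combination (1/2) * H013 + (1/6) * H031 + (-1/6) * H130 + (-1/3) * hskew 0 1 3 + (-1/6) * hskew 1 0 3 + (1) * B2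
  · simp only [my_mk0, my_mk1, my_mk2, my_mk3, my_hd00, my_hd01, my_hd02, my_hd03, my_hd10, my_hd11, my_hd12, my_hd13, my_hd20, my_hd21, my_hd22, my_hd23, my_hd30, my_hd31, my_hd32, my_hd33, my_eta00, my_eta01, my_eta02, my_eta03, my_eta10, my_eta11, my_eta12, my_eta13, my_eta20, my_eta21, my_eta22, my_eta23, my_eta30, my_eta31, my_eta32, my_eta33]
    linear_combination (-1/2) * H023 + (-1/6) * H032 + (1/6) * H230 + (1/3) * hskew 0 2 3 + (1/6) * hskew 2 0 3 + (1) * B1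
  · simp only [my_mk0, my_mk1, my_mk2, my_mk3, my_hd00, my_hd01, my_hd02, my_hd03, my_hd10, my_hd11, my_hd12, my_hd13, my_hd20, my_hd21, my_hd22, my_hd23, my_hd30, my_hd31, my_hd32, my_hd33, my_eta00, my_eta01, my_eta02, my_eta03, my_eta10, my_eta11, my_eta12, my_eta13, my_eta20, my_eta21, my_eta22, my_eta23, my_eta30, my_eta31, my_eta32, my_eta33]
    linear_combination (-1/2) * H011 + (1/2) * H022 + (1/4) * H110 + (-1/4) * H220 + (1/4) * hskew 0 1 1 + (-1/4) * hskew 0 2 2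
  · simp only [my_mk0, my_mk1, my_mk2, my_mk3, my_hd00, my_hd01, my_hd02, my_hd03, my_hd10, my_hd11, my_hd12, my_hd13, my_hd20, my_hd21, my_hd22, my_hd23, my_hd30, my_hd31, my_hd32, my_hd33, my_eta00, my_eta01, my_eta02, my_eta03, my_eta10, my_eta11, my_eta12, my_eta13, my_eta20, my_eta21, my_eta22, my_eta23, my_eta30, my_eta31, my_eta32, my_eta33]
    linear_combination (-1/2) * H112 + (-1/2) * H233 + (1/4) * H332 + (1/2) * hskew 1 1 2 + (1/4) * hskew 2 3 3
  · simp only [my_mk0, my_mk1, my_mk2, my_mk3, my_hd00, my_hd01, my_hd02, my_hd03, my_hd10, my_hd11, my_hd12, my_hd13, my_hd20, my_hd21, my_hd22, my_hd23, my_hd30, my_hd31, my_hd32, my_hd33, my_eta00, my_eta01, my_eta02, my_eta03, my_eta10, my_eta11, my_eta12, my_eta13, my_eta20, my_eta21, my_eta22, my_eta23, my_eta30, my_eta31, my_eta32, my_eta33]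
    linear_combination (-1/2) * H012 + (-1/6) * H021 + (1/6) * H120 + (1/3) * hskew 0 1 2 + (1/6) * hskew 1 0 2 + (1) * B3
  · simp only [my_mk0, my_mk1, my_mk2, my_mk3, my_hd00, my_hd01, my_hd02, my_hd03, my_hd10, my_hd11, my_hd12, my_hd13, my_hd20, my_hd21, my_hd22, my_hd23, my_hd30, my_hd31, my_hd32, my_hd33, my_eta00, my_eta01, my_eta02, my_eta03, my_eta10, my_eta11, my_eta12, my_eta13, my_eta20, my_eta21, my_eta22, my_eta23, my_eta30, my_eta31, my_eta32, my_eta33]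
    linear_combination (1/2) * H011 + (-1/2) * H033 + (-1/4) * H110 + (1/4) * H330 + (-1/4) * hskew 0 1 1 + (1/4) * hskew 0 3 3
  · simp only [my_mk0, my_mk1, my_mk2, my_mk3, my_hd00, my_hd01, my_hd02, my_hd03, my_hd10, my_hd11, my_hd12, my_hd13, my_hd20, my_hd21, my_hd22, my_hd23, my_hd30, my_hd31, my_hd32, my_hd33, my_eta00, my_eta01, my_eta02, my_eta03, my_eta10, my_eta11, my_eta12, my_eta13, my_eta20, my_eta21, my_eta22, my_eta23, my_eta30, my_eta31, my_eta32, my_eta33]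
    linear_combination (1/3) * H032 + (-1/3) * H230 + (-1/6) * hskew 0 2 3 + (1/6) * hskew 2 0 3 + (1) * B1
  · simp only [my_mk0, my_mk1, my_mk2, my_mk3, my_hd00, my_hd01, my_hd02, my_hd03, my_hd10, my_hd11, my_hd12, my_hd13, my_hd20, my_hd21, my_hd22, my_hd23, my_hd30, my_hd31, my_hd32, my_hd33, my_eta00, my_eta01, my_eta02, my_eta03, my_eta10, my_eta11, my_eta12, my_eta13, my_eta20, my_eta21, my_eta22, my_eta23, my_eta30, my_eta31, my_eta32, my_eta33]
    linear_combination (1/2) * H013 + (-1/6) * H031 + (1/6) * H130 + (-1/6) * hskew 0 1 3 + (-1/3) * hskew 1 0 3 + (-1) * B2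
  · simp only [my_mk0, my_mk1, my_mk2, my_mk3, my_hd00, my_hd01, my_hd02, my_hd03, my_hd10, my_hd11, my_hd12, my_hd13, my_hd20, my_hd21, my_hd22, my_hd23, my_hd30, my_hd31, my_hd32, my_hd33, my_eta00, my_eta01, my_eta02, my_eta03, my_eta10, my_eta11, my_eta12, my_eta13, my_eta20, my_eta21, my_eta22, my_eta23, my_eta30, my_eta31, my_eta32, my_eta33]
    linear_combination (1/2) * H003 + (1/2) * H223 + (-1/2) * hskew 0 0 3 + (-1/2) * hskew 2 2 3
  · simp only [my_mk0, my_mk1, my_mk2, my_mk3, my_hd00, my_hd01, my_hd02, my_hd03, my_hd10, my_hd11, my_hd12, my_hd13, my_hd20, my_hd21, my_hd22, my_hd23, my_hd30, my_hd31, my_hd32, my_hd33, my_eta00, my_eta01, my_eta02, my_eta03, my_eta10, my_eta11, my_eta12, my_eta13, my_eta20, my_eta21, my_eta22, my_eta23, my_eta30, my_eta31, my_eta32, my_eta33]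
    linear_combination (-1/2) * H123 + (-1/6) * H132 + (1/6) * H231 + (1/3) * hskew 1 2 3 + (1/6) * hskew 2 1 3 + (1) * B0
  · simp only [my_mk0, my_mk1, my_mk2, my_mk3, my_hd00, my_hd01, my_hd02, my_hd03, my_hd10, my_hd11, my_hd12, my_hd13, my_hd20, my_hd21, my_hd22, my_hd23, my_hd30, my_hd31, my_hd32, my_hd33, my_eta00, my_eta01, my_eta02, my_eta03, my_eta10, my_eta11, my_eta12, my_eta13, my_eta20, my_eta21, my_eta22, my_eta23, my_eta30, my_eta31, my_eta32, my_eta33]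
    linear_combination (-1/2) * H001 + (1/2) * H122 + (-1/4) * H221 + (1/2) * hskew 0 0 1 + (-1/4) * hskew 1 2 2
  · simp only [my_mk0, my_mk1, my_mk2, my_mk3, my_hd00, my_hd01, my_hd02, my_hd03, my_hd10, my_hd11, my_hd12, my_hd13, my_hd20, my_hd21, my_hd22, my_hd23, my_hd30, my_hd31, my_hd32, my_hd33, my_eta00, my_eta01, my_eta02, my_eta03, my_eta10, my_eta11, my_eta12, my_eta13, my_eta20, my_eta21, my_eta22, my_eta23, my_eta30, my_eta31, my_eta32, my_eta33]
    linear_combination (1/2) * H113 + (-1/2) * H223 + (-1/2) * hskew 1 1 3 + (1/2) * hskew 2 2 3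
  · simp only [my_mk0, my_mk1, my_mk2, my_mk3, my_hd00, my_hd01, my_hd02, my_hd03, my_hd10, my_hd11, my_hd12, my_hd13, my_hd20, my_hd21, my_hd22, my_hd23, my_hd30, my_hd31, my_hd32, my_hd33, my_eta00, my_eta01, my_eta02, my_eta03, my_eta10, my_eta11, my_eta12, my_eta13, my_eta20, my_eta21, my_eta22, my_eta23, my_eta30, my_eta31, my_eta32, my_eta33]
    linear_combination (1/2) * H013 + (1/6) * H031 + (-1/6) * H130 + (-1/3) * hskew 0 1 3 + (-1/6) * hskew 1 0 3 + (1) * B2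
  · simp only [my_mk0, my_mk1, my_mk2, my_mk3, my_hd00, my_hd01, my_hd02, my_hd03, my_hd10, my_hd11, my_hd12, my_hd13, my_hd20, my_hd21, my_hd22, my_hd23, my_hd30, my_hd31, my_hd32, my_hd33, my_eta00, my_eta01, my_eta02, my_eta03, my_eta10, my_eta11, my_eta12, my_eta13, my_eta20, my_eta21, my_eta22, my_eta23, my_eta30, my_eta31, my_eta32, my_eta33]
    linear_combination (-1/2) * H023 + (-1/6) * H032 + (1/6) * H230 + (1/3) * hskew 0 2 3 + (1/6) * hskew 2 0 3 + (1) * B1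
  · simp only [my_mk0, my_mk1, my_mk2, my_mk3, my_hd00, my_hd01, my_hd02, my_hd03, my_hd10, my_hd11, my_hd12, my_hd13, my_hd20, my_hd21, my_hd22, my_hd23, my_hd30, my_hd31, my_hd32, my_hd33, my_eta00, my_eta01, my_eta02, my_eta03, my_eta10, my_eta11, my_eta12, my_eta13, my_eta20, my_eta21, my_eta22, my_eta23, my_eta30, my_eta31, my_eta32, my_eta33]
    linear_combination (-1/2) * H011 + (1/2) * H022 + (1/4) * H110 + (-1/4) * H220 + (1/4) * hskew 0 1 1 + (-1/4) * hskew 0 2 2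
  · simp only [my_mk0, my_mk1, my_mk2, my_mk3, my_hd00, my_hd01, my_hd02, my_hd03, my_hd10, my_hd11, my_hd12, my_hd13, my_hd20, my_hd21, my_hd22, my_hd23, my_hd30, my_hd31, my_hd32, my_hd33, my_eta00, my_eta01, my_eta02, my_eta03, my_eta10, my_eta11, my_eta12, my_eta13, my_eta20, my_eta21, my_eta22, my_eta23, my_eta30, my_eta31, my_eta32, my_eta33]
    linear_combination (1) * H123 + (1/3) * H132 + (-1/3) * H231 + (-2/3) * hskew 1 2 3 + (-1/3) * hskew 2 1 3 + (-2) * B0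
  · simp only [my_mk0, my_mk1, my_mk2, my_mk3, my_hd00, my_hd01, my_hd02, my_hd03, my_hd10, my_hd11, my_hd12, my_hd13, my_hd20, my_hd21, my_hd22, my_hd23, my_hd30, my_hd31, my_hd32, my_hd33, my_eta00, my_eta01, my_eta02, my_eta03, my_eta10, my_eta11, my_eta12, my_eta13, my_eta20, my_eta21, my_eta22, my_eta23, my_eta30, my_eta31, my_eta32, my_eta33]
    linear_combination (1) * H023 + (1/3) * H032 + (-1/3) * H230 + (-2/3) * hskew 0 2 3 + (-1/3) * hskew 2 0 3 + (-2) * B1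
  · simp only [my_mk0, my_mk1, my_mk2, my_mk3, my_hd00, my_hd01, my_hd02, my_hd03, my_hd10, my_hd11, my_hd12, my_hd13, my_hd20, my_hd21, my_hd22, my_hd23, my_hd30, my_hd31, my_hd32, my_hd33, my_eta00, my_eta01, my_eta02, my_eta03, my_eta10, my_eta11, my_eta12, my_eta13, my_eta20, my_eta21, my_eta22, my_eta23, my_eta30, my_eta31, my_eta32, my_eta33]
    linear_combination (0 : ℝ) * B0
  · simp only [my_mk0, my_mk1, my_mk2, my_mk3, my_hd00, my_hd01, my_hd02, my_hd03, my_hd10, my_hd11, my_hd12, my_hd13, my_hd20, my_hd21, my_hd22, my_hd23, my_hd30, my_hd31, my_hd32, my_hd33, my_eta00, my_eta01, my_eta02, my_eta03, my_eta10, my_eta11, my_eta12, my_eta13, my_eta20, my_eta21, my_eta22, my_eta23, my_eta30, my_eta31, my_eta32, my_eta33]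
    linear_combination (-2/3) * H021 + (2/3) * H120 + (1/3) * hskew 0 1 2 + (-1/3) * hskew 1 0 2 + (-2) * B3
  · simp only [my_mk0, my_mk1, my_mk2, my_mk3, my_hd00, my_hd01, my_hd02, my_hd03, my_hd10, my_hd11, my_hd12, my_hd13, my_hd20, my_hd21, my_hd22, my_hd23, my_hd30, my_hd31, my_hd32, my_hd33, my_eta00, my_eta01, my_eta02, my_eta03, my_eta10, my_eta11, my_eta12, my_eta13, my_eta20, my_eta21, my_eta22, my_eta23, my_eta30, my_eta31, my_eta32, my_eta33]
    linear_combination (-1/2) * H122 + (1/2) * H133 + (1/4) * H221 + (-1/4) * H331 + (1/4) * hskew 1 2 2 + (-1/4) * hskew 1 3 3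
  · simp only [my_mk0, my_mk1, my_mk2, my_mk3, my_hd00, my_hd01, my_hd02, my_hd03, my_hd10, my_hd11, my_hd12, my_hd13, my_hd20, my_hd21, my_hd22, my_hd23, my_hd30, my_hd31, my_hd32, my_hd33, my_eta00, my_eta01, my_eta02, my_eta03, my_eta10, my_eta11, my_eta12, my_eta13, my_eta20, my_eta21, my_eta22, my_eta23, my_eta30, my_eta31, my_eta32, my_eta33]
    linear_combination (-1/2) * H022 + (1/2) * H033 + (1/4) * H220 + (-1/4) * H330 + (1/4) * hskew 0 2 2 + (-1/4) * hskew 0 3 3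
  · simp only [my_mk0, my_mk1, my_mk2, my_mk3, my_hd00, my_hd01, my_hd02, my_hd03, my_hd10, my_hd11, my_hd12, my_hd13, my_hd20, my_hd21, my_hd22, my_hd23, my_hd30, my_hd31, my_hd32, my_hd33, my_eta00, my_eta01, my_eta02, my_eta03, my_eta10, my_eta11, my_eta12, my_eta13, my_eta20, my_eta21, my_eta22, my_eta23, my_eta30, my_eta31, my_eta32, my_eta33]
    linear_combination (1/3) * H021 + (-1/3) * H120 + (-1/6) * hskew 0 1 2 + (1/6) * hskew 1 0 2 + (1) * B3
  · simp only [my_mk0, my_mk1, my_mk2, my_mk3, my_hd00, my_hd01, my_hd02, my_hd03, my_hd10, my_hd11, my_hd12, my_hd13, my_hd20, my_hd21, my_hd22, my_hd23, my_hd30, my_hd31, my_hd32, my_hd33, my_eta00, my_eta01, my_eta02, my_eta03, my_eta10, my_eta11, my_eta12, my_eta13, my_eta20, my_eta21, my_eta22, my_eta23, my_eta30, my_eta31, my_eta32, my_eta33]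
    linear_combination (-1/3) * H031 + (1/3) * H130 + (1/6) * hskew 0 1 3 + (-1/6) * hskew 1 0 3 + (1) * B2
  · simp only [my_mk0, my_mk1, my_mk2, my_mk3, my_hd00, my_hd01, my_hd02, my_hd03, my_hd10, my_hd11, my_hd12, my_hd13, my_hd20, my_hd21, my_hd22, my_hd23, my_hd30, my_hd31, my_hd32, my_hd33, my_eta00, my_eta01, my_eta02, my_eta03, my_eta10, my_eta11, my_eta12, my_eta13, my_eta20, my_eta21, my_eta22, my_eta23, my_eta30, my_eta31, my_eta32, my_eta33]
    linear_combination (-1/2) * H012 + (1/6) * H021 + (-1/6) * H120 + (1/6) * hskew 0 1 2 + (1/3) * hskew 1 0 2 + (-1) * B3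
  · simp only [my_mk0, my_mk1, my_mk2, my_mk3, my_hd00, my_hd01, my_hd02, my_hd03, my_hd10, my_hd11, my_hd12, my_hd13, my_hd20, my_hd21, my_hd22, my_hd23, my_hd30, my_hd31, my_hd32, my_hd33, my_eta00, my_eta01, my_eta02, my_eta03, my_eta10, my_eta11, my_eta12, my_eta13, my_eta20, my_eta21, my_eta22, my_eta23, my_eta30, my_eta31, my_eta32, my_eta33]
    linear_combination (-1/2) * H002 + (1/2) * H233 + (-1/4) * H332 + (1/2) * hskew 0 0 2 + (-1/4) * hskew 2 3 3
  · simp only [my_mk0, my_mk1, my_mk2, my_mk3, my_hd00, my_hd01, my_hd02, my_hd03, my_hd10, my_hd11, my_hd12, my_hd13, my_hd20, my_hd21, my_hd22, my_hd23, my_hd30, my_hd31, my_hd32, my_hd33, my_eta00, my_eta01, my_eta02, my_eta03, my_eta10, my_eta11, my_eta12, my_eta13, my_eta20, my_eta21, my_eta22, my_eta23, my_eta30, my_eta31, my_eta32, my_eta33]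
    linear_combination (1/2) * H001 + (-1/2) * H133 + (1/4) * H331 + (-1/2) * hskew 0 0 1 + (1/4) * hskew 1 3 3
  · simp only [my_mk0, my_mk1, my_mk2, my_mk3, my_hd00, my_hd01, my_hd02, my_hd03, my_hd10, my_hd11, my_hd12, my_hd13, my_hd20, my_hd21, my_hd22, my_hd23, my_hd30, my_hd31, my_hd32, my_hd33, my_eta00, my_eta01, my_eta02, my_eta03, my_eta10, my_eta11, my_eta12, my_eta13, my_eta20, my_eta21, my_eta22, my_eta23, my_eta30, my_eta31, my_eta32, my_eta33]
    linear_combination (1/3) * H132 + (-1/3) * H231 + (-1/6) * hskew 1 2 3 + (1/6) * hskew 2 1 3 + (1) * B0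
  · simp only [my_mk0, my_mk1, my_mk2, my_mk3, my_hd00, my_hd01, my_hd02, my_hd03, my_hd10, my_hd11, my_hd12, my_hd13, my_hd20, my_hd21, my_hd22, my_hd23, my_hd30, my_hd31, my_hd32, my_hd33, my_eta00, my_eta01, my_eta02, my_eta03, my_eta10, my_eta11, my_eta12, my_eta13, my_eta20, my_eta21, my_eta22, my_eta23, my_eta30, my_eta31, my_eta32, my_eta33]
    linear_combination (-1/2) * H112 + (-1/2) * H233 + (1/4) * H332 + (1/2) * hskew 1 1 2 + (1/4) * hskew 2 3 3
  · simp only [my_mk0, my_mk1, my_mk2, my_mk3, my_hd00, my_hd01, my_hd02, my_hd03, my_hd10, my_hd11, my_hd12, my_hd13, my_hd20, my_hd21, my_hd22, my_hd23, my_hd30, my_hd31, my_hd32, my_hd33, my_eta00, my_eta01, my_eta02, my_eta03, my_eta10, my_eta11, my_eta12, my_eta13, my_eta20, my_eta21, my_eta22, my_eta23, my_eta30, my_eta31, my_eta32, my_eta33]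
    linear_combination (-1/2) * H012 + (-1/6) * H021 + (1/6) * H120 + (1/3) * hskew 0 1 2 + (1/6) * hskew 1 0 2 + (1) * B3
  · simp only [my_mk0, my_mk1, my_mk2, my_mk3, my_hd00, my_hd01, my_hd02, my_hd03, my_hd10, my_hd11, my_hd12, my_hd13, my_hd20, my_hd21, my_hd22, my_hd23, my_hd30, my_hd31, my_hd32, my_hd33, my_eta00, my_eta01, my_eta02, my_eta03, my_eta10, my_eta11, my_eta12, my_eta13, my_eta20, my_eta21, my_eta22, my_eta23, my_eta30, my_eta31, my_eta32, my_eta33]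
    linear_combination (1/2) * H011 + (-1/2) * H033 + (-1/4) * H110 + (1/4) * H330 + (-1/4) * hskew 0 1 1 + (1/4) * hskew 0 3 3
  · simp only [my_mk0, my_mk1, my_mk2, my_mk3, my_hd00, my_hd01, my_hd02, my_hd03, my_hd10, my_hd11, my_hd12, my_hd13, my_hd20, my_hd21, my_hd22, my_hd23, my_hd30, my_hd31, my_hd32, my_hd33, my_eta00, my_eta01, my_eta02, my_eta03, my_eta10, my_eta11, my_eta12, my_eta13, my_eta20, my_eta21, my_eta22, my_eta23, my_eta30, my_eta31, my_eta32, my_eta33]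
    linear_combination (1/3) * H032 + (-1/3) * H230 + (-1/6) * hskew 0 2 3 + (1/6) * hskew 2 0 3 + (1) * B1
  · simp only [my_mk0, my_mk1, my_mk2, my_mk3, my_hd00, my_hd01, my_hd02, my_hd03, my_hd10, my_hd11, my_hd12, my_hd13, my_hd20, my_hd21, my_hd22, my_hd23, my_hd30, my_hd31, my_hd32, my_hd33, my_eta00, my_eta01, my_eta02, my_eta03, my_eta10, my_eta11, my_eta12, my_eta13, my_eta20, my_eta21, my_eta22, my_eta23, my_eta30, my_eta31, my_eta32, my_eta33]
    linear_combination (-1/2) * H122 + (1/2) * H133 + (1/4) * H221 + (-1/4) * H331 + (1/4) * hskew 1 2 2 + (-1/4) * hskew 1 3 3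
  · simp only [my_mk0, my_mk1, my_mk2, my_mk3, my_hd00, my_hd01, my_hd02, my_hd03, my_hd10, my_hd11, my_hd12, my_hd13, my_hd20, my_hd21, my_hd22, my_hd23, my_hd30, my_hd31, my_hd32, my_hd33, my_eta00, my_eta01, my_eta02, my_eta03, my_eta10, my_eta11, my_eta12, my_eta13, my_eta20, my_eta21, my_eta22, my_eta23, my_eta30, my_eta31, my_eta32, my_eta33]
    linear_combination (-1/2) * H022 + (1/2) * H033 + (1/4) * H220 + (-1/4) * H330 + (1/4) * hskew 0 2 2 + (-1/4) * hskew 0 3 3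
  · simp only [my_mk0, my_mk1, my_mk2, my_mk3, my_hd00, my_hd01, my_hd02, my_hd03, my_hd10, my_hd11, my_hd12, my_hd13, my_hd20, my_hd21, my_hd22, my_hd23, my_hd30, my_hd31, my_hd32, my_hd33, my_eta00, my_eta01, my_eta02, my_eta03, my_eta10, my_eta11, my_eta12, my_eta13, my_eta20, my_eta21, my_eta22, my_eta23, my_eta30, my_eta31, my_eta32, my_eta33]
    linear_combination (1/3) * H021 + (-1/3) * H120 + (-1/6) * hskew 0 1 2 + (1/6) * hskew 1 0 2 + (1) * B3
  · simp only [my_mk0, my_mk1, my_mk2, my_mk3, my_hd00, my_hd01, my_hd02, my_hd03, my_hd10, my_hd11, my_hd12, my_hd13, my_hd20, my_hd21, my_hd22, my_hd23, my_hd30, my_hd31, my_hd32, my_hd33, my_eta00, my_eta01, my_eta02, my_eta03, my_eta10, my_eta11, my_eta12, my_eta13, my_eta20, my_eta21, my_eta22, my_eta23, my_eta30, my_eta31, my_eta32, my_eta33]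
    linear_combination (-1/3) * H031 + (1/3) * H130 + (1/6) * hskew 0 1 3 + (-1/6) * hskew 1 0 3 + (1) * B2
  · simp only [my_mk0, my_mk1, my_mk2, my_mk3, my_hd00, my_hd01, my_hd02, my_hd03, my_hd10, my_hd11, my_hd12, my_hd13, my_hd20, my_hd21, my_hd22, my_hd23, my_hd30, my_hd31, my_hd32, my_hd33, my_eta00, my_eta01, my_eta02, my_eta03, my_eta10, my_eta11, my_eta12, my_eta13, my_eta20, my_eta21, my_eta22, my_eta23, my_eta30, my_eta31, my_eta32, my_eta33]
    linear_combination (-2/3) * H132 + (2/3) * H231 + (1/3) * hskew 1 2 3 + (-1/3) * hskew 2 1 3 + (-2) * B0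
  · simp only [my_mk0, my_mk1, my_mk2, my_mk3, my_hd00, my_hd01, my_hd02, my_hd03, my_hd10, my_hd11, my_hd12, my_hd13, my_hd20, my_hd21, my_hd22, my_hd23, my_hd30, my_hd31, my_hd32, my_hd33, my_eta00, my_eta01, my_eta02, my_eta03, my_eta10, my_eta11, my_eta12, my_eta13, my_eta20, my_eta21, my_eta22, my_eta23, my_eta30, my_eta31, my_eta32, my_eta33]
    linear_combination (-2/3) * H032 + (2/3) * H230 + (1/3) * hskew 0 2 3 + (-1/3) * hskew 2 0 3 + (-2) * B1
  · simp only [my_mk0, my_mk1, my_mk2, my_mk3, my_hd00, my_hd01, my_hd02, my_hd03, my_hd10, my_hd11, my_hd12, my_hd13, my_hd20, my_hd21, my_hd22, my_hd23, my_hd30, my_hd31, my_hd32, my_hd33, my_eta00, my_eta01, my_eta02, my_eta03, my_eta10, my_eta11, my_eta12, my_eta13, my_eta20, my_eta21, my_eta22, my_eta23, my_eta30, my_eta31, my_eta32, my_eta33]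
    linear_combination (2/3) * H031 + (-2/3) * H130 + (-1/3) * hskew 0 1 3 + (1/3) * hskew 1 0 3 + (-2) * B2
  · simp only [my_mk0, my_mk1, my_mk2, my_mk3, my_hd00, my_hd01, my_hd02, my_hd03, my_hd10, my_hd11, my_hd12, my_hd13, my_hd20, my_hd21, my_hd22, my_hd23, my_hd30, my_hd31, my_hd32, my_hd33, my_eta00, my_eta01, my_eta02, my_eta03, my_eta10, my_eta11, my_eta12, my_eta13, my_eta20, my_eta21, my_eta22, my_eta23, my_eta30, my_eta31, my_eta32, my_eta33]
    linear_combination (0 : ℝ) * B0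


lemma my_fderiv_comb {x w : V4} (f g : V4 → ℝ) (hf : DifferentiableAt ℝ f x)
    (hg : DifferentiableAt ℝ g x) :
    fderiv ℝ (fun y => (f y - g y)/2) x w = (fderiv ℝ f x w - fderiv ℝ g x w)/2 := by
  rw [show (fun y => (f y - g y)/2) = (fun y => (1/2 : ℝ) * (f y - g y)) from
    funext fun y => by ring]
  rw [((hf.hasFDerivAt.fun_sub hg.hasFDerivAt).const_mul (1/2 : ℝ)).fderiv]
  simp
  ring

lemma my_Dd_hodge (A : V4 → Mat4) (hA : ∀ i j, ContDiff ℝ (⊤ : ℕ∞) (fun x => A x i j)) (x w : V4) :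
    Dd (fun y => hodge (A y)) x w = hodge (Dd A x w) := by
  have d : ∀ i j, DifferentiableAt ℝ (fun y => A y i j) x :=
    fun i j => ((hA i j).differentiable (by simp)).differentiableAt
  ext i j
  fin_cases i <;> fin_cases j
  · simp only [my_mk0, my_mk1, my_mk2, my_mk3, Dd, Matrix.of_apply, my_hd00]
    simp
  · simp only [my_mk0, my_mk1, my_mk2, my_mk3, Dd, Matrix.of_apply, my_hd01]
    rw [my_fderiv_comb (fun y => A y 2 3) (fun y => A y 3 2) (d 2 3) (d 3 2)]
  · simp only [my_mk0, my_mk1, my_mk2, my_mk3, Dd, Matrix.of_apply, my_hd02]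
    rw [my_fderiv_comb (fun y => A y 3 1) (fun y => A y 1 3) (d 3 1) (d 1 3)]
  · simp only [my_mk0, my_mk1, my_mk2, my_mk3, Dd, Matrix.of_apply, my_hd03]
    rw [my_fderiv_comb (fun y => A y 1 2) (fun y => A y 2 1) (d 1 2) (d 2 1)]
  · simp only [my_mk0, my_mk1, my_mk2, my_mk3, Dd, Matrix.of_apply, my_hd10]
    rw [my_fderiv_comb (fun y => A y 3 2) (fun y => A y 2 3) (d 3 2) (d 2 3)]
  · simp only [my_mk0, my_mk1, my_mk2, my_mk3, Dd, Matrix.of_apply, my_hd11]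
    simp
  · simp only [my_mk0, my_mk1, my_mk2, my_mk3, Dd, Matrix.of_apply, my_hd12]
    rw [my_fderiv_comb (fun y => A y 3 0) (fun y => A y 0 3) (d 3 0) (d 0 3)]
  · simp only [my_mk0, my_mk1, my_mk2, my_mk3, Dd, Matrix.of_apply, my_hd13]
    rw [my_fderiv_comb (fun y => A y 0 2) (fun y => A y 2 0) (d 0 2) (d 2 0)]
  · simp only [my_mk0, my_mk1, my_mk2, my_mk3, Dd, Matrix.of_apply, my_hd20]
    rw [my_fderiv_comb (fun y => A y 1 3) (fun y => A y 3 1) (d 1 3) (d 3 1)]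
  · simp only [my_mk0, my_mk1, my_mk2, my_mk3, Dd, Matrix.of_apply, my_hd21]
    rw [my_fderiv_comb (fun y => A y 0 3) (fun y => A y 3 0) (d 0 3) (d 3 0)]
  · simp only [my_mk0, my_mk1, my_mk2, my_mk3, Dd, Matrix.of_apply, my_hd22]
    simp
  · simp only [my_mk0, my_mk1, my_mk2, my_mk3, Dd, Matrix.of_apply, my_hd23]
    rw [my_fderiv_comb (fun y => A y 1 0) (fun y => A y 0 1) (d 1 0) (d 0 1)]
  · simp only [my_mk0, my_mk1, my_mk2, my_mk3, Dd, Matrix.of_apply, my_hd30]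
    rw [my_fderiv_comb (fun y => A y 2 1) (fun y => A y 1 2) (d 2 1) (d 1 2)]
  · simp only [my_mk0, my_mk1, my_mk2, my_mk3, Dd, Matrix.of_apply, my_hd31]
    rw [my_fderiv_comb (fun y => A y 2 0) (fun y => A y 0 2) (d 2 0) (d 0 2)]
  · simp only [my_mk0, my_mk1, my_mk2, my_mk3, Dd, Matrix.of_apply, my_hd32]
    rw [my_fderiv_comb (fun y => A y 0 1) (fun y => A y 1 0) (d 0 1) (d 1 0)]
  · simp only [my_mk0, my_mk1, my_mk2, my_mk3, Dd, Matrix.of_apply, my_hd33]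
    simp

set_option maxHeartbeats 4000000 in
/-- The conformal Killing–Yano condition is invariant under Hodge duality
(flat case). -/

theorem stmt15 (A : V4 → Mat4) (hA : SmoothTwoFormField A) (hCKY : FlatCKY A) :
    FlatCKY (fun x => hodge (A x)) := by
  intro x u v z
  have hskew : ∀ α i j : Fin 4, Dd A x (e α) j i = - Dd A x (e α) i j := by
    intro α i j
    have hfun : (fun y => A y j i) = fun y => -(A y i j) := funext fun y => by
      have h1 := hA.1 y
      have h2 : (A y)ᵀ i j = (-(A y)) i j := by rw [h1]
      simpa [Matrix.transpose_apply] using h2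
    show fderiv ℝ (fun y => A y j i) x (e α) = - fderiv ℝ (fun y => A y i j) x (e α)
    rw [hfun, fderiv_fun_neg]
    simp
  have hh : ∀ i j k : Fin 4, Dd A x (e i) j k + Dd A x (e j) i k =
      2 * ηm i j * (-(1/3) * codiff A x (e k)) - (-(1/3) * codiff A x (e i)) * ηm j k
        - (-(1/3) * codiff A x (e j)) * ηm i k := by
    intro i j k
    have h0 := hCKY x (e i) (e j) (e k)
    simpa only [my_bil_basis, my_etab_basis] using h0
  have hDdh : ∀ w, Dd (fun y => hodge (A y)) x w = hodge (Dd A x w) :=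
    fun w => my_Dd_hodge A hA.2 x w
  have hbb : ∀ k : Fin 4, (-(1/3) * codiff (fun y => hodge (A y)) x (e k) : ℝ) =
      (1/3) * (-(hodge (Dd A x (e 0)) 0 k) + hodge (Dd A x (e 1)) 1 k +
        hodge (Dd A x (e 2)) 2 k + hodge (Dd A x (e 3)) 3 k) := by
    intro k
    simp only [codiff, Fin.sum_univ_four, my_bil_basis, hDdh, my_eta00, my_eta01, my_eta02, my_eta03, my_eta10, my_eta11, my_eta12, my_eta13, my_eta20, my_eta21, my_eta22, my_eta23, my_eta30, my_eta31, my_eta32, my_eta33]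
    ring
  have KEY := my_key (fun α => Dd A x (e α)) hskew
      (fun k => -(1/3) * codiff A x (e k)) hh
      (fun k => -(1/3) * codiff (fun y => hodge (A y)) x (e k)) hbb
  have K000 := KEY 0 0 0
  have K001 := KEY 0 0 1
  have K002 := KEY 0 0 2
  have K003 := KEY 0 0 3
  have K010 := KEY 0 1 0
  have K011 := KEY 0 1 1
  have K012 := KEY 0 1 2
  have K013 := KEY 0 1 3
  have K020 := KEY 0 2 0
  have K021 := KEY 0 2 1
  have K022 := KEY 0 2 2
  have K023 := KEY 0 2 3
  have K030 := KEY 0 3 0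
  have K031 := KEY 0 3 1
  have K032 := KEY 0 3 2
  have K033 := KEY 0 3 3
  have K100 := KEY 1 0 0
  have K101 := KEY 1 0 1
  have K102 := KEY 1 0 2
  have K103 := KEY 1 0 3
  have K110 := KEY 1 1 0
  have K111 := KEY 1 1 1
  have K112 := KEY 1 1 2
  have K113 := KEY 1 1 3
  have K120 := KEY 1 2 0
  have K121 := KEY 1 2 1
  have K122 := KEY 1 2 2
  have K123 := KEY 1 2 3
  have K130 := KEY 1 3 0
  have K131 := KEY 1 3 1
  have K132 := KEY 1 3 2
  have K133 := KEY 1 3 3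
  have K200 := KEY 2 0 0
  have K201 := KEY 2 0 1
  have K202 := KEY 2 0 2
  have K203 := KEY 2 0 3
  have K210 := KEY 2 1 0
  have K211 := KEY 2 1 1
  have K212 := KEY 2 1 2
  have K213 := KEY 2 1 3
  have K220 := KEY 2 2 0
  have K221 := KEY 2 2 1
  have K222 := KEY 2 2 2
  have K223 := KEY 2 2 3
  have K230 := KEY 2 3 0
  have K231 := KEY 2 3 1
  have K232 := KEY 2 3 2
  have K233 := KEY 2 3 3
  have K300 := KEY 3 0 0
  have K301 := KEY 3 0 1
  have K302 := KEY 3 0 2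
  have K303 := KEY 3 0 3
  have K310 := KEY 3 1 0
  have K311 := KEY 3 1 1
  have K312 := KEY 3 1 2
  have K313 := KEY 3 1 3
  have K320 := KEY 3 2 0
  have K321 := KEY 3 2 1
  have K322 := KEY 3 2 2
  have K323 := KEY 3 2 3
  have K330 := KEY 3 3 0
  have K331 := KEY 3 3 1
  have K332 := KEY 3 3 2
  have K333 := KEY 3 3 3
  simp only [my_hd00, my_hd01, my_hd02, my_hd03, my_hd10, my_hd11, my_hd12, my_hd13, my_hd20, my_hd21, my_hd22, my_hd23, my_hd30, my_hd31, my_hd32, my_hd33, my_eta00, my_eta01, my_eta02, my_eta03, my_eta10, my_eta11, my_eta12, my_eta13, my_eta20, my_eta21, my_eta22, my_eta23, my_eta30, my_eta31, my_eta32, my_eta33] at K000 K001 K002 K003 K010 K011 K012 K013 K020 K021 K022 K023 K030 K031 K032 K033 K100 K101 K102 K103 K110 K111 K112 K113 K120 K121 K122 K123 K130 K131 K132 K133 K200 K201 K202 K203 K210 K211 K212 K213 K220 K221 K222 K223 K230 K231 K232 K233 K300 K301 K302 K303 K310 K311 K312 K313 K320 K321 K322 K323 K330 K331 K332 K333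
  rw [my_L1 (fun x => hodge (A x)) x u v z, my_L1 (fun x => hodge (A x)) x v u z]
  rw [my_codiff_lin (fun x => hodge (A x)) x z, my_codiff_lin (fun x => hodge (A x)) x u,
    my_codiff_lin (fun x => hodge (A x)) x v]
  rw [my_eta_expand u v, my_eta_expand v z, my_eta_expand u z]
  simp only [hDdh, Fin.sum_univ_four, my_hd00, my_hd01, my_hd02, my_hd03, my_hd10, my_hd11, my_hd12, my_hd13, my_hd20, my_hd21, my_hd22, my_hd23, my_hd30, my_hd31, my_hd32, my_hd33, my_eta00, my_eta01, my_eta02, my_eta03, my_eta10, my_eta11, my_eta12, my_eta13, my_eta20, my_eta21, my_eta22, my_eta23, my_eta30, my_eta31, my_eta32, my_eta33]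
  linear_combination (u 0 * v 0 * z 0) * K000 +
    (u 0 * v 0 * z 1) * K001 +
    (u 0 * v 0 * z 2) * K002 +
    (u 0 * v 0 * z 3) * K003 +
    (u 0 * v 1 * z 0) * K010 +
    (u 0 * v 1 * z 1) * K011 +
    (u 0 * v 1 * z 2) * K012 +
    (u 0 * v 1 * z 3) * K013 +
    (u 0 * v 2 * z 0) * K020 +
    (u 0 * v 2 * z 1) * K021 +
    (u 0 * v 2 * z 2) * K022 +
    (u 0 * v 2 * z 3) * K023 +
    (u 0 * v 3 * z 0) * K030 +
    (u 0 * v 3 * z 1) * K031 +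
    (u 0 * v 3 * z 2) * K032 +
    (u 0 * v 3 * z 3) * K033 +
    (u 1 * v 0 * z 0) * K100 +
    (u 1 * v 0 * z 1) * K101 +
    (u 1 * v 0 * z 2) * K102 +
    (u 1 * v 0 * z 3) * K103 +
    (u 1 * v 1 * z 0) * K110 +
    (u 1 * v 1 * z 1) * K111 +
    (u 1 * v 1 * z 2) * K112 +
    (u 1 * v 1 * z 3) * K113 +
    (u 1 * v 2 * z 0) * K120 +
    (u 1 * v 2 * z 1) * K121 +
    (u 1 * v 2 * z 2) * K122 +
    (u 1 * v 2 * z 3) * K123 +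
    (u 1 * v 3 * z 0) * K130 +
    (u 1 * v 3 * z 1) * K131 +
    (u 1 * v 3 * z 2) * K132 +
    (u 1 * v 3 * z 3) * K133 +
    (u 2 * v 0 * z 0) * K200 +
    (u 2 * v 0 * z 1) * K201 +
    (u 2 * v 0 * z 2) * K202 +
    (u 2 * v 0 * z 3) * K203 +
    (u 2 * v 1 * z 0) * K210 +
    (u 2 * v 1 * z 1) * K211 +
    (u 2 * v 1 * z 2) * K212 +
    (u 2 * v 1 * z 3) * K213 +
    (u 2 * v 2 * z 0) * K220 +
    (u 2 * v 2 * z 1) * K221 +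
    (u 2 * v 2 * z 2) * K222 +
    (u 2 * v 2 * z 3) * K223 +
    (u 2 * v 3 * z 0) * K230 +
    (u 2 * v 3 * z 1) * K231 +
    (u 2 * v 3 * z 2) * K232 +
    (u 2 * v 3 * z 3) * K233 +
    (u 3 * v 0 * z 0) * K300 +
    (u 3 * v 0 * z 1) * K301 +
    (u 3 * v 0 * z 2) * K302 +
    (u 3 * v 0 * z 3) * K303 +
    (u 3 * v 1 * z 0) * K310 +
    (u 3 * v 1 * z 1) * K311 +
    (u 3 * v 1 * z 2) * K312 +
    (u 3 * v 1 * z 3) * K313 +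
    (u 3 * v 2 * z 0) * K320 +
    (u 3 * v 2 * z 1) * K321 +
    (u 3 * v 2 * z 2) * K322 +
    (u 3 * v 2 * z 3) * K323 +
    (u 3 * v 3 * z 0) * K330 +
    (u 3 * v 3 * z 1) * K331 +
    (u 3 * v 3 * z 2) * K332 +
    (u 3 * v 3 * z 3) * K333
end

section
/- Conformal Killing–Yano tensors and null geodesics (flat case): let A be a smooth 2-form field on ℝ⁴ satisfying the flat conformal Killing–Yano equation, let u ∈ ℝ⁴ be a null vector (η(u,u) = 0), let p ∈ ℝ⁴, and let γ(t) = p + t·u. Define the vector p(t) ∈ ℝ⁴ by η(p(t), z) = A(γ(t))(z, u) for all z. Then the derivative p′(t) is proportional to u for every t — explicitly, p′(t) = −(1/3)·(δA)(γ(t))(u) · u — and consequently the function t ↦ η(p(t), p(t)) is constant, i.e. A²(u,u) is a first integral along null geodesics. -/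
open Matrix Real

lemma etam_sq' (j : Fin 4) : ηm j j * ηm j j = 1 := by fin_cases j <;> norm_num [ηm]

lemma etab_e' (x : V4) (j : Fin 4) : ηb x (e j) = x j * ηm j j := by
  simp [ηb, e, dotProduct, Matrix.mulVec_diagonal, Pi.single_apply, ηm]

lemma bil_e' (B : Mat4) (j : Fin 4) (u : V4) : bil B (e j) u = (B *ᵥ u) j := by
  simp [bil, e, dotProduct, Pi.single_apply]

lemma etab_sum' (x y : V4) : ηb x y = ∑ i, x i * (ηm i i * y i) := by
  simp [ηb, ηm, dotProduct, Matrix.mulVec_diagonal, Matrix.diagonal_apply_eq]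

lemma bil_skew' {B : Mat4} (hB : Bᵀ = -B) (x y : V4) : bil B x y = - bil B y x := by
  calc bil B x y = x ⬝ᵥ B *ᵥ y := rfl
    _ = x ᵥ* B ⬝ᵥ y := (Matrix.dotProduct_mulVec x B y)
    _ = (Bᵀ *ᵥ x) ⬝ᵥ y := by rw [← Matrix.mulVec_transpose]
    _ = ((-B) *ᵥ x) ⬝ᵥ y := by rw [hB]
    _ = -(B *ᵥ x ⬝ᵥ y) := by simp [Matrix.neg_mulVec]
    _ = - bil B y x := by rw [dotProduct_comm]; rfl

lemma Dd_skew' (A : V4 → Mat4) (hA1 : ∀ x, (A x)ᵀ = -(A x)) (x v : V4) :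
    (Dd A x v)ᵀ = -(Dd A x v) := by
  ext i j
  have hfun : (fun y => A y j i) = fun y => -(A y i j) := by
    funext y
    have := congrFun (congrFun (hA1 y) i) j
    simpa [Matrix.transpose_apply] using this
  simp only [Matrix.transpose_apply, Matrix.neg_apply, Dd, Matrix.of_apply]
  rw [hfun, fderiv_fun_neg]
  simp

lemma comp_hasDerivAt' (A : V4 → Mat4) (hA2 : ∀ i j, ContDiff ℝ (⊤ : ℕ∞) (fun x => A x i j)) (u p : V4)
    (i j : Fin 4) (t : ℝ) :
    HasDerivAt (fun s => A (p + s • u) i j) (Dd A (p + t • u) u i j) t := by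
  have hγ : HasDerivAt (fun s : ℝ => p + s • u) u t := by
    simpa using ((hasDerivAt_id t).smul_const u).const_add p
  have hf : HasFDerivAt (fun y => A y i j) (fderiv ℝ (fun y => A y i j) (p + t • u)) (p + t • u) :=
    (((hA2 i j).differentiable (by simp)) (p + t • u)).hasFDerivAt
  simpa [Dd, Function.comp_def] using hf.comp_hasDerivAt t hγ

/-- Conformal Killing–Yano tensors and null geodesics (flat case): along a null
line `γ(t) = p + t·u`, the vector `q(t)` defined by `η(q(t),z) = A(γ(t))(z,u)`
has derivative `q′(t) = -(1/3)(δA)(γ(t))(u)·u`, proportional to `u`; hence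
`η(q(t),q(t)) = A²(u,u)` is a first integral. -/
theorem stmt16 (A : V4 → Mat4) (hA : SmoothTwoFormField A) (hCKY : FlatCKY A)
    (u : V4) (hu : ηb u u = 0) (p : V4) (q : ℝ → V4)
    (hq : ∀ t : ℝ, ∀ z : V4, ηb (q t) z = bil (A (p + t • u)) z u) :
    (∀ t : ℝ, deriv q t = (-(1/3) * codiff A (p + t • u) u) • u) ∧
    ∀ t s : ℝ, ηb (q t) (q t) = ηb (q s) (q s) := by
  obtain ⟨hA1, hA2⟩ := hA
  -- notation
  set a : ℝ → ℝ := fun t => -(1/3) * codiff A (p + t • u) u with ha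
  -- key CKY consequence: bil (Dd A x u) z u = a(u) * ηb u z
  have hkey : ∀ x z : V4, bil (Dd A x u) z u = (-(1/3) * codiff A x u) * ηb u z := by
    intro x z
    have h := hCKY x u u z
    rw [hu] at h
    have hs := bil_skew' (Dd_skew' A hA1 x u) z u
    linear_combination hs - h / 2
  -- derivative of each component of q
  have hqc : ∀ (t : ℝ) (j : Fin 4), q t j = ηm j j * ((A (p + t • u)) *ᵥ u) j := by
    intro t j
    have h := hq t (e j)
    rw [etab_e', bil_e'] at h
    linear_combination (ηm j j) * h - q t j * etam_sq' j
  have hqd : ∀ (t : ℝ) (j : Fin 4),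
      HasDerivAt (fun t => q t j) ((-(1/3) * codiff A (p + t • u) u) * u j) t := by
    intro t j
    have hrep : (fun t => q t j) = fun t => ηm j j * ∑ k, A (p + t • u) j k * u k := by
      funext s
      rw [hqc s j]
      rfl
    have hD : HasDerivAt (fun t => ηm j j * ∑ k, A (p + t • u) j k * u k)
        (ηm j j * ∑ k, Dd A (p + t • u) u j k * u k) t := by
      exact (HasDerivAt.fun_sum fun k _ => (comp_hasDerivAt' A hA2 u p j k t).mul_const (u k)).const_mul _
    rw [hrep]
    convert hD using 1
    have h1 : (∑ k, Dd A (p + t • u) u j k * u k) = bil (Dd A (p + t • u) u) (e j) u := by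
      rw [bil_e']
      rfl
    rw [h1, hkey, etab_e']
    linear_combination ((-(1/3) * codiff A (p + t • u) u) * u j) * (etam_sq' j).symm
  have hq' : ∀ t : ℝ, HasDerivAt q ((-(1/3) * codiff A (p + t • u) u) • u) t := by
    intro t
    exact hasDerivAt_pi.2 fun j => hqd t j
  constructor
  · intro t
    exact (hq' t).deriv
  · -- η(q t, q t) is constant
    have hqu : ∀ t : ℝ, ηb (q t) u = 0 := by
      intro t
      rw [hq t u]
      have := bil_skew' (hA1 (p + t • u)) u u
      linarith
    have hφ : ∀ t : ℝ, HasDerivAt (fun t => ηb (q t) (q t)) 0 t := by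
      intro t
      have hrep : (fun t => ηb (q t) (q t)) = fun t => ∑ i, q t i * (ηm i i * q t i) := by
        funext s; exact etab_sum' _ _
      rw [hrep]
      have hD : HasDerivAt (fun t => ∑ i, q t i * (ηm i i * q t i))
          (∑ i, (((-(1/3) * codiff A (p + t • u) u) * u i) * (ηm i i * q t i)
            + q t i * (ηm i i * ((-(1/3) * codiff A (p + t • u) u) * u i)))) t := by
        exact HasDerivAt.fun_sum fun i _ => (hqd t i).mul ((hqd t i).const_mul (ηm i i))
      convert hD using 1
      have h2 : (∑ i, (((-(1/3) * codiff A (p + t • u) u) * u i) * (ηm i i * q t i)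
            + q t i * (ηm i i * ((-(1/3) * codiff A (p + t • u) u) * u i))))
          = 2 * (-(1/3) * codiff A (p + t • u) u) * ηb (q t) u := by
        rw [etab_sum', Finset.mul_sum]
        exact Finset.sum_congr rfl fun i _ => by ring
      rw [h2, hqu t, mul_zero]
    intro t s
    exact is_const_of_deriv_eq_zero (fun t => (hφ t).differentiableAt)
      (fun t => (hφ t).deriv) t s
end

section
/- Maxwell–Rainich equations (flat case): let Ω ⊆ ℝ⁴ be open, let U be a smooth field of unitary 2-forms on Ω (i.e. tr(Û(x)∘Û(x)) = 2 and tr(Û(x)∘(*U(x))̂) = 0 for all x ∈ Ω), let φ, ψ : Ω → ℝ be smooth, and set F(x) := e^{φ(x)}·(cos ψ(x) · U(x) + sin ψ(x) · *U(x)). Then F satisfies the source-free Maxwell equations (δF)(x) = 0 and (δ*F)(x) = 0 on Ω if and only if for all x ∈ Ω and all z ∈ ℝ⁴: (Dφ)(x)(z) = (i(δU)U)(x)(z) − (i(δ*U)*U)(x)(z) and (Dψ)(x)(z) = −(i(δU)*U)(x)(z) − (i(δ*U)U)(x)(z), where Dφ, Dψ denote the differentials of φ and ψ. -/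
open Matrix Real

lemma fv0 : ((0 : Fin 4) : ℕ) = 0 := rfl
lemma fv1 : ((1 : Fin 4) : ℕ) = 1 := rfl
lemma fv2 : ((2 : Fin 4) : ℕ) = 2 := rfl
lemma fv3 : ((3 : Fin 4) : ℕ) = 3 := rfl
set_option maxHeartbeats 2000000 in
lemma hodge_ex (M : Mat4) : hodge M =
    !![0, (M 2 3 - M 3 2)/2, (M 3 1 - M 1 3)/2, (M 1 2 - M 2 1)/2;
       (M 3 2 - M 2 3)/2, 0, (M 3 0 - M 0 3)/2, (M 0 2 - M 2 0)/2;
       (M 1 3 - M 3 1)/2, (M 0 3 - M 3 0)/2, 0, (M 1 0 - M 0 1)/2;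
       (M 2 1 - M 1 2)/2, (M 2 0 - M 0 2)/2, (M 0 1 - M 1 0)/2, 0] := by
  ext i j
  fin_cases i <;> fin_cases j <;>
    · simp only [hodge, Matrix.of_apply, Fin.sum_univ_four]
      norm_num [lc, ηm, Matrix.diagonal_apply, Fin.ext_iff, fv0, fv1, fv2, fv3,
        Matrix.cons_val', Matrix.cons_val_two, Matrix.cons_val_three, Matrix.tail_cons, Matrix.cons_val_zero, Matrix.cons_val_one, Matrix.head_cons,
        Matrix.empty_val', Matrix.cons_val_fin_one, Matrix.head_fin_const]
      try ring
lemma skew_apply {M : Mat4} (h : Mᵀ = -M) (i j : Fin 4) : M j i = -M i j := by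
  have := congrFun (congrFun h i) j
  simpa [Matrix.transpose_apply, Matrix.neg_apply] using this

lemma skew_diag {M : Mat4} (h : Mᵀ = -M) (i : Fin 4) : M i i = 0 := by
  have := skew_apply h i i; linarith

-- expand trace hypotheses into scalar equations
set_option maxHeartbeats 2000000 in
lemma trace_AA {M : Mat4} (h : Mᵀ = -M) (ht : (hat M * hat M).trace = 2) :
    M 0 1 ^2 + M 0 2 ^2 + M 0 3 ^2 - M 1 2 ^2 - M 1 3 ^2 - M 2 3 ^2 = 1 := by
  have h10 := skew_apply h 0 1; have h20 := skew_apply h 0 2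
  have h30 := skew_apply h 0 3; have h21 := skew_apply h 1 2
  have h31 := skew_apply h 1 3; have h32 := skew_apply h 2 3
  have d0 := skew_diag h 0; have d1 := skew_diag h 1
  have d2 := skew_diag h 2; have d3 := skew_diag h 3
  simp only [hat, Matrix.trace, Matrix.diag_apply, Fin.sum_univ_four, Matrix.mul_apply,
    Matrix.transpose_apply, ηm, Matrix.diagonal_apply, Fin.ext_iff, fv0, fv1, fv2, fv3,
    Matrix.cons_val_two, Matrix.cons_val_three, Matrix.tail_cons, Matrix.head_cons] at ht
  norm_num at ht
  simp only [h10, h20, h30, h21, h31, h32, d0, d1, d2, d3] at ht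
  nlinarith [ht]
set_option maxHeartbeats 2000000 in
lemma trace_AB {M : Mat4} (h : Mᵀ = -M) (ht : (hat M * hat (hodge M)).trace = 0) :
    M 0 1 * M 2 3 - M 0 2 * M 1 3 + M 0 3 * M 1 2 = 0 := by
  have h10 := skew_apply h 0 1; have h20 := skew_apply h 0 2
  have h30 := skew_apply h 0 3; have h21 := skew_apply h 1 2
  have h31 := skew_apply h 1 3; have h32 := skew_apply h 2 3
  have d0 := skew_diag h 0; have d1 := skew_diag h 1
  have d2 := skew_diag h 2; have d3 := skew_diag h 3
  rw [hodge_ex] at ht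
  simp only [hat, Matrix.trace, Matrix.diag_apply, Fin.sum_univ_four, Matrix.mul_apply,
    Matrix.transpose_apply, ηm, Matrix.diagonal_apply, Fin.ext_iff, fv0, fv1, fv2, fv3,
    Matrix.cons_val', Matrix.of_apply, Matrix.cons_val, Matrix.cons_val_zero, Matrix.cons_val_one, Matrix.head_cons,
    Matrix.empty_val', Matrix.cons_val_fin_one, Matrix.head_fin_const] at ht
  norm_num at ht
  simp only [h10, h20, h30, h21, h31, h32, d0, d1, d2, d3] at ht
  nlinarith [ht]
lemma fmk0 : (⟨0, by norm_num⟩ : Fin 4) = 0 := rfl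
lemma fmk1 : (⟨1, by norm_num⟩ : Fin 4) = 1 := rfl
lemma fmk2 : (⟨2, by norm_num⟩ : Fin 4) = 2 := rfl
lemma fmk3 : (⟨3, by norm_num⟩ : Fin 4) = 3 := rfl

set_option maxHeartbeats 4000000 in
lemma identAA {M : Mat4} (h : Mᵀ = -M) (ht : (hat M * hat M).trace = 2) :
    ηm * M * (ηm * M) = 1 + ηm * hodge M * (ηm * hodge M) := by
  have ht1 := trace_AA h ht
  have h10 := skew_apply h 0 1; have h20 := skew_apply h 0 2
  have h30 := skew_apply h 0 3; have h21 := skew_apply h 1 2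
  have h31 := skew_apply h 1 3; have h32 := skew_apply h 2 3
  have d0 := skew_diag h 0; have d1 := skew_diag h 1
  have d2 := skew_diag h 2; have d3 := skew_diag h 3
  rw [hodge_ex]
  ext i j
  fin_cases i <;> fin_cases j <;>
    · simp only [fmk0, fmk1, fmk2, fmk3, Matrix.mul_apply, Fin.sum_univ_four, ηm,
        Matrix.diagonal_apply, Matrix.add_apply, Matrix.one_apply, Fin.ext_iff, fv0, fv1, fv2, fv3,
        Matrix.cons_val', Matrix.of_apply, Matrix.cons_val, Matrix.cons_val_zero, Matrix.cons_val_one, Matrix.head_cons,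
        Matrix.empty_val', Matrix.cons_val_fin_one, Matrix.head_fin_const,
        h10, h20, h30, h21, h31, h32, d0, d1, d2, d3]
      norm_num
      try first | ring1 | linear_combination ht1
set_option maxHeartbeats 4000000 in
lemma identAB {M : Mat4} (h : Mᵀ = -M) (ht : (hat M * hat (hodge M)).trace = 0) :
    ηm * M * (ηm * hodge M) = 0 := by
  have ht2 := trace_AB h ht
  have h10 := skew_apply h 0 1; have h20 := skew_apply h 0 2
  have h30 := skew_apply h 0 3; have h21 := skew_apply h 1 2
  have h31 := skew_apply h 1 3; have h32 := skew_apply h 2 3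
  have d0 := skew_diag h 0; have d1 := skew_diag h 1
  have d2 := skew_diag h 2; have d3 := skew_diag h 3
  rw [hodge_ex]
  ext i j
  fin_cases i <;> fin_cases j <;>
    · simp only [fmk0, fmk1, fmk2, fmk3, Matrix.mul_apply, Fin.sum_univ_four, ηm,
        Matrix.diagonal_apply, Matrix.zero_apply, Fin.ext_iff, fv0, fv1, fv2, fv3,
        Matrix.cons_val', Matrix.of_apply, Matrix.cons_val, Matrix.cons_val_zero, Matrix.cons_val_one, Matrix.head_cons,
        Matrix.empty_val', Matrix.cons_val_fin_one, Matrix.head_fin_const,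
        h10, h20, h30, h21, h31, h32, d0, d1, d2, d3]
      norm_num
      try first | ring1 | linear_combination ht2 | linear_combination -ht2
set_option maxHeartbeats 4000000 in
lemma identBA {M : Mat4} (h : Mᵀ = -M) (ht : (hat M * hat (hodge M)).trace = 0) :
    ηm * hodge M * (ηm * M) = 0 := by
  have ht2 := trace_AB h ht
  have h10 := skew_apply h 0 1; have h20 := skew_apply h 0 2
  have h30 := skew_apply h 0 3; have h21 := skew_apply h 1 2
  have h31 := skew_apply h 1 3; have h32 := skew_apply h 2 3
  have d0 := skew_diag h 0; have d1 := skew_diag h 1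
  have d2 := skew_diag h 2; have d3 := skew_diag h 3
  rw [hodge_ex]
  ext i j
  fin_cases i <;> fin_cases j <;>
    · simp only [fmk0, fmk1, fmk2, fmk3, Matrix.mul_apply, Fin.sum_univ_four, ηm,
        Matrix.diagonal_apply, Matrix.zero_apply, Fin.ext_iff, fv0, fv1, fv2, fv3,
        Matrix.cons_val', Matrix.of_apply, Matrix.cons_val, Matrix.cons_val_zero, Matrix.cons_val_one, Matrix.head_cons,
        Matrix.empty_val', Matrix.cons_val_fin_one, Matrix.head_fin_const,
        h10, h20, h30, h21, h31, h32, d0, d1, d2, d3]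
      norm_num
      try first | ring1 | linear_combination ht2 | linear_combination -ht2
set_option maxHeartbeats 1000000 in
lemma hodge_lin (c s : ℝ) (M N : Mat4) :
    hodge (c • M + s • N) = c • hodge M + s • hodge N := by
  ext i j
  simp only [hodge, Matrix.of_apply, Fin.sum_univ_four, Matrix.smul_apply,
    Matrix.add_apply, smul_eq_mul]
  ring
set_option maxHeartbeats 1000000 in
lemma hodge_smul (r : ℝ) (M : Mat4) : hodge (r • M) = r • hodge M := by
  ext i j
  simp only [hodge, Matrix.of_apply, Fin.sum_univ_four, Matrix.smul_apply, smul_eq_mul]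
  ring

set_option maxHeartbeats 2000000 in
lemma hodge_hodge {M : Mat4} (h : Mᵀ = -M) : hodge (hodge M) = -M := by
  have h10 := skew_apply h 0 1; have h20 := skew_apply h 0 2
  have h30 := skew_apply h 0 3; have h21 := skew_apply h 1 2
  have h31 := skew_apply h 1 3; have h32 := skew_apply h 2 3
  have d0 := skew_diag h 0; have d1 := skew_diag h 1
  have d2 := skew_diag h 2; have d3 := skew_diag h 3
  rw [hodge_ex M, hodge_ex]
  ext i j
  fin_cases i <;> fin_cases j <;>
    · simp only [fmk0, fmk1, fmk2, fmk3, Matrix.neg_apply, Fin.ext_iff, fv0, fv1, fv2, fv3,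
        Matrix.cons_val', Matrix.of_apply, Matrix.cons_val, Matrix.cons_val_zero, Matrix.cons_val_one, Matrix.head_cons,
        Matrix.empty_val', Matrix.cons_val_fin_one, Matrix.head_fin_const,
        h10, h20, h30, h21, h31, h32, d0, d1, d2, d3]
      norm_num [h10, h20, h30, h21, h31, h32, d0, d1, d2, d3]
      try ring1
lemma vecMul_smulM (v : V4) (M : Mat4) (r : ℝ) : v ᵥ* (r • M) = r • (v ᵥ* M) := by
  funext k
  simp [Matrix.vecMul, dotProduct, Fin.sum_univ_four, Matrix.smul_apply]
  ring

lemma rainich_alg (A B : Mat4) (p q a b : V4) (c s : ℝ) (hcs : c^2 + s^2 = 1)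
    (hAA : A*A = 1 + B*B) (hAB : A*B = 0) (hBA : B*A = 0) :
    (c • a + s • b = p ᵥ* (c•A + s•B) + q ᵥ* (c•B - s•A) ∧
      c • b - s • a = p ᵥ* (c•B - s•A) + q ᵥ* (-(c•A) - s•B)) ↔
    (p = a ᵥ* A - b ᵥ* B ∧ q = -(a ᵥ* B) - b ᵥ* A) := by
  constructor
  · rintro ⟨E1, E2⟩
    simp only [Matrix.vecMul_add, Matrix.vecMul_sub, vecMul_smulM, Matrix.vecMul_neg] at E1 E2
    have Ea : a = p ᵥ* A + q ᵥ* B := by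
      funext k
      have e1 := congrFun E1 k; have e2 := congrFun E2 k
      simp only [Pi.add_apply, Pi.sub_apply, Pi.smul_apply, Pi.neg_apply, smul_eq_mul] at e1 e2 ⊢
      linear_combination c*e1 - s*e2 + ((p ᵥ* A) k + (q ᵥ* B) k - a k)*hcs
    have Eb : b = p ᵥ* B - q ᵥ* A := by
      funext k
      have e1 := congrFun E1 k; have e2 := congrFun E2 k
      simp only [Pi.add_apply, Pi.sub_apply, Pi.smul_apply, Pi.neg_apply, smul_eq_mul] at e1 e2 ⊢
      linear_combination s*e1 + c*e2 + ((p ᵥ* B) k - (q ᵥ* A) k - b k)*hcs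
    constructor
    · rw [Ea, Eb]
      simp only [Matrix.add_vecMul, Matrix.sub_vecMul, Matrix.vecMul_vecMul, hAA, hAB, hBA,
        Matrix.vecMul_add, Matrix.vecMul_one, Matrix.vecMul_zero]
      abel
    · rw [Ea, Eb]
      simp only [Matrix.add_vecMul, Matrix.sub_vecMul, Matrix.vecMul_vecMul, hAA, hAB, hBA,
        Matrix.vecMul_add, Matrix.vecMul_one, Matrix.vecMul_zero]
      abel
  · rintro ⟨hp, hq⟩
    have Ea : p ᵥ* A + q ᵥ* B = a := by
      rw [hp, hq]
      simp only [Matrix.sub_vecMul, Matrix.neg_vecMul, Matrix.vecMul_vecMul,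
        hAA, hAB, hBA, Matrix.vecMul_add, Matrix.vecMul_one, Matrix.vecMul_zero]
      abel
    have Eb : p ᵥ* B - q ᵥ* A = b := by
      rw [hp, hq]
      simp only [Matrix.sub_vecMul, Matrix.neg_vecMul, Matrix.vecMul_vecMul,
        hAA, hAB, hBA, Matrix.vecMul_add, Matrix.vecMul_one, Matrix.vecMul_zero]
      abel
    constructor
    · simp only [Matrix.vecMul_add, Matrix.vecMul_sub, vecMul_smulM, Matrix.vecMul_neg]
      rw [← Ea, ← Eb]
      simp only [smul_add, smul_sub]
      abel
    · simp only [Matrix.vecMul_add, Matrix.vecMul_sub, vecMul_smulM, Matrix.vecMul_neg]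
      rw [← Ea, ← Eb]
      simp only [smul_add, smul_sub, smul_neg]
      abel
set_option maxHeartbeats 1000000 in
lemma icontr_vec (ω : V4 → ℝ) (G : Mat4) (z : V4) :
    icontr ω G z = ((fun α => ω (e α)) ᵥ* (ηm * G)) ⬝ᵥ z := by
  simp only [icontr, bil, Matrix.vecMul, dotProduct, Matrix.mulVec, Matrix.mul_apply,
    Fin.sum_univ_four, e, ηm, Matrix.diagonal_apply, Fin.ext_iff, fv0, fv1, fv2, fv3,
    Pi.single_apply]
  norm_num
  ring

set_option maxHeartbeats 1000000 in
lemma codiff_dot (A : V4 → Mat4) (x z : V4) :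
    codiff A x z = (fun k => codiff A x (e k)) ⬝ᵥ z := by
  simp only [codiff, bil, dotProduct, Matrix.mulVec, Fin.sum_univ_four, e,
    ηm, Matrix.diagonal_apply, Fin.ext_iff, fv0, fv1, fv2, fv3, Pi.single_apply]
  norm_num
  ring

lemma dot_single (w : V4) (k : Fin 4) : w ⬝ᵥ e k = w k := by
  fin_cases k <;>
    · simp only [dotProduct, Fin.sum_univ_four, e, Pi.single_apply, Fin.ext_iff,
        fmk0, fmk1, fmk2, fmk3, fv0, fv1, fv2, fv3]
      norm_num

lemma clm_dot (L : V4 →L[ℝ] ℝ) (z : V4) : L z = (fun k => L (e k)) ⬝ᵥ z := by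
  have hz : z = z 0 • e 0 + z 1 • e 1 + z 2 • e 2 + z 3 • e 3 := by
    funext i
    fin_cases i <;>
      · simp only [Pi.add_apply, Pi.smul_apply, e, Pi.single_apply, Fin.ext_iff,
          fmk0, fmk1, fmk2, fmk3, fv0, fv1, fv2, fv3, smul_eq_mul]
        norm_num
  conv_lhs => rw [hz]
  simp only [map_add, _root_.map_smul, smul_eq_mul, dotProduct, Fin.sum_univ_four]
  ring

lemma codiff_neg (A : V4 → Mat4) (x z : V4) :
    codiff (fun y => -A y) x z = -codiff A x z := by
  have h : ∀ u i j, Dd (fun y => -A y) x u i j = -(Dd A x u i j) := by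
    intro u i j
    simp only [Dd, Matrix.of_apply]
    have : (fun y => (-A y : Mat4) i j) = fun y => -(A y i j) := by
      funext y; simp
    rw [this, fderiv_fun_neg]
    simp
  simp only [codiff, bil, dotProduct, Matrix.mulVec, Fin.sum_univ_four, h]
  ring
set_option maxHeartbeats 4000000 in
lemma core {x : V4} {φ ψ : V4 → ℝ}
    (hφ : DifferentiableAt ℝ φ x) (hψ : DifferentiableAt ℝ ψ x)
    (V1 V2 G : V4 → Mat4)
    (hd1 : ∀ i j, DifferentiableAt ℝ (fun y => V1 y i j) x)
    (hd2 : ∀ i j, DifferentiableAt ℝ (fun y => V2 y i j) x)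
    (hG : ∀ i j, (fun y => G y i j) =ᶠ[nhds x]
      fun y => Real.exp (φ y) * (Real.cos (ψ y) * V1 y i j + Real.sin (ψ y) * V2 y i j))
    (z : V4) :
    codiff G x z = Real.exp (φ x) * (Real.cos (ψ x) * codiff V1 x z
      + Real.sin (ψ x) * codiff V2 x z
      - icontr (fun v => fderiv ℝ φ x v) (Real.cos (ψ x) • V1 x + Real.sin (ψ x) • V2 x) z
      - icontr (fun v => fderiv ℝ ψ x v) (Real.cos (ψ x) • V2 x - Real.sin (ψ x) • V1 x) z) := by
  have hDd : ∀ (u : V4) (i j : Fin 4), fderiv ℝ (fun y => G y i j) x u =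
      Real.exp (φ x) * ((Real.cos (ψ x) * V1 x i j + Real.sin (ψ x) * V2 x i j) * fderiv ℝ φ x u
        + (Real.cos (ψ x) * V2 x i j - Real.sin (ψ x) * V1 x i j) * fderiv ℝ ψ x u
        + Real.cos (ψ x) * fderiv ℝ (fun y => V1 y i j) x u
        + Real.sin (ψ x) * fderiv ℝ (fun y => V2 y i j) x u) := by
    intro u i j
    have hexp := hφ.hasFDerivAt.exp
    have hcos := hψ.hasFDerivAt.cos
    have hsin := hψ.hasFDerivAt.sin
    have hin := (hcos.mul (hd1 i j).hasFDerivAt).add (hsin.mul (hd2 i j).hasFDerivAt)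
    have h2 := (hexp.mul hin).congr_of_eventuallyEq (hG i j)
    rw [h2.fderiv]
    simp only [ContinuousLinearMap.add_apply, ContinuousLinearMap.smul_apply,
      ContinuousLinearMap.neg_apply, smul_eq_mul, Pi.add_apply, Pi.mul_apply]
    ring
  simp only [codiff, bil, icontr, Dd, Matrix.of_apply, dotProduct, Matrix.mulVec, Fin.sum_univ_four,
    Matrix.smul_apply, Matrix.add_apply, Matrix.sub_apply, smul_eq_mul, e, Pi.single_apply,
    Fin.ext_iff, fmk0, fmk1, fmk2, fmk3, fv0, fv1, fv2, fv3, ηm, Matrix.diagonal_apply, hDd]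
  norm_num
  ring
/-- Maxwell–Rainich equations (flat case): for `F = e^φ(cos ψ · U + sin ψ · *U)`
with `U` a smooth field of unitary 2-forms on an open set `Ω`, the source-free
Maxwell equations `δF = 0`, `δ*F = 0` hold on `Ω` iff
`Dφ = i(δU)U - i(δ*U)*U` and `Dψ = -i(δU)*U - i(δ*U)U` on `Ω`. -/
theorem stmt18 (Ω : Set V4) (hΩ : IsOpen Ω) (U : V4 → Mat4)
    (hUsk : ∀ x ∈ Ω, (U x)ᵀ = -(U x))
    (hUun : ∀ x ∈ Ω, (hat (U x) * hat (U x)).trace = 2 ∧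
      (hat (U x) * hat (hodge (U x))).trace = 0)
    (hUsm : ∀ i j, ContDiffOn ℝ (⊤ : ℕ∞) (fun x => U x i j) Ω)
    (φ ψ : V4 → ℝ) (hφ : ContDiffOn ℝ (⊤ : ℕ∞) φ Ω) (hψ : ContDiffOn ℝ (⊤ : ℕ∞) ψ Ω)
    (F : V4 → Mat4)
    (hF : ∀ x, F x =
      Real.exp (φ x) • (Real.cos (ψ x) • U x + Real.sin (ψ x) • hodge (U x))) :
    (∀ x ∈ Ω, ∀ z : V4, codiff F x z = 0 ∧
        codiff (fun y => hodge (F y)) x z = 0) ↔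
    (∀ x ∈ Ω, ∀ z : V4,
      fderiv ℝ φ x z =
        icontr (codiff U x) (U x) z -
          icontr (codiff (fun y => hodge (U y)) x) (hodge (U x)) z ∧
      fderiv ℝ ψ x z =
        -icontr (codiff U x) (hodge (U x)) z -
          icontr (codiff (fun y => hodge (U y)) x) (U x) z) := by
  have key : ∀ x, x ∈ Ω → ((∀ z : V4, codiff F x z = 0 ∧
        codiff (fun y => hodge (F y)) x z = 0) ↔
      (∀ z : V4,
        fderiv ℝ φ x z =
          icontr (codiff U x) (U x) z -
            icontr (codiff (fun y => hodge (U y)) x) (hodge (U x)) z ∧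
        fderiv ℝ ψ x z =
          -icontr (codiff U x) (hodge (U x)) z -
            icontr (codiff (fun y => hodge (U y)) x) (U x) z)) := by
    intro x hx
    have hxm := hΩ.mem_nhds hx
    have hsk := hUsk x hx
    obtain ⟨ht1, ht2⟩ := hUun x hx
    have hdU : ∀ i j, DifferentiableAt ℝ (fun y => U y i j) x := fun i j =>
      ((hUsm i j).differentiableOn (by simp)).differentiableAt hxm
    have hdφ : DifferentiableAt ℝ φ x := (hφ.differentiableOn (by simp)).differentiableAt hxm
    have hdψ : DifferentiableAt ℝ ψ x := (hψ.differentiableOn (by simp)).differentiableAt hxm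
    have hdH : ∀ i j, DifferentiableAt ℝ (fun y => hodge (U y) i j) x := by
      intro i j
      fin_cases i <;> fin_cases j <;>
        · simp only [hodge_ex, Matrix.cons_val', Matrix.of_apply, Matrix.cons_val, Matrix.cons_val_zero, Matrix.cons_val_one,
            Matrix.head_cons, Matrix.empty_val', Matrix.cons_val_fin_one, Matrix.head_fin_const,
            fmk0, fmk1, fmk2, fmk3]
          norm_num
          all_goals
            simp only [div_eq_mul_inv]
            exact ((hdU _ _).sub (hdU _ _)).mul_const _
    have hdN : ∀ i j, DifferentiableAt ℝ (fun y => (-U y : Mat4) i j) x := by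
      intro i j
      simp only [Matrix.neg_apply]
      exact (hdU i j).neg
    have hGF : ∀ i j, (fun y => F y i j) =ᶠ[nhds x]
        fun y => Real.exp (φ y) * (Real.cos (ψ y) * U y i j + Real.sin (ψ y) * hodge (U y) i j) := by
      intro i j
      filter_upwards with y
      rw [hF y]
      simp [Matrix.smul_apply, Matrix.add_apply, smul_eq_mul]
    have hGsF : ∀ i j, (fun y => hodge (F y) i j) =ᶠ[nhds x]
        fun y => Real.exp (φ y) * (Real.cos (ψ y) * hodge (U y) i j +
          Real.sin (ψ y) * (-U y : Mat4) i j) := by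
      intro i j
      filter_upwards [hxm] with y hy
      rw [hF y, hodge_smul, hodge_lin, hodge_hodge (hUsk y hy)]
      simp [Matrix.smul_apply, Matrix.add_apply, Matrix.neg_apply, smul_eq_mul]
      try ring
    have hc1 := core hdφ hdψ U (fun y => hodge (U y)) F hdU hdH hGF
    have hc2 := core hdφ hdψ (fun y => hodge (U y)) (fun y => -U y)
      (fun y => hodge (F y)) hdH hdN hGsF
    have hm1 : ηm * (Real.cos (ψ x) • U x + Real.sin (ψ x) • hodge (U x)) = Real.cos (ψ x) • (ηm * U x) + Real.sin (ψ x) • (ηm * hodge (U x)) := by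
      rw [Matrix.mul_add, Matrix.mul_smul, Matrix.mul_smul]
    have hm2 : ηm * (Real.cos (ψ x) • hodge (U x) - Real.sin (ψ x) • U x) = Real.cos (ψ x) • (ηm * hodge (U x)) - Real.sin (ψ x) • (ηm * U x) := by
      rw [Matrix.mul_sub, Matrix.mul_smul, Matrix.mul_smul]
    have hw1 : ∀ z, codiff F x z = Real.exp (φ x) * ((Real.cos (ψ x) • (fun k => codiff U x (e k)) + Real.sin (ψ x) • (fun k => codiff (fun y => hodge (U y)) x (e k)) - (fun k => (fderiv ℝ φ x) (e k)) ᵥ* (Real.cos (ψ x) • (ηm * U x) + Real.sin (ψ x) • (ηm * hodge (U x))) - (fun k => (fderiv ℝ ψ x) (e k)) ᵥ* (Real.cos (ψ x) • (ηm * hodge (U x)) - Real.sin (ψ x) • (ηm * U x)) : V4) ⬝ᵥ z) := by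
      intro z
      rw [hc1 z, codiff_dot U, codiff_dot (fun y => hodge (U y)), icontr_vec, icontr_vec,
        hm1, hm2]
      simp only [sub_dotProduct, add_dotProduct, smul_dotProduct,
        smul_eq_mul]
      try ring
    have hm4 : ηm * (Real.cos (ψ x) • hodge (U x) + Real.sin (ψ x) • (fun y => -U y) x) = Real.cos (ψ x) • (ηm * hodge (U x)) - Real.sin (ψ x) • (ηm * U x) := by
      show ηm * (Real.cos (ψ x) • hodge (U x) + Real.sin (ψ x) • (-U x)) = _
      rw [Matrix.mul_add, Matrix.mul_smul, Matrix.mul_smul, Matrix.mul_neg, smul_neg,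
        ← sub_eq_add_neg]
    have hm5 : ηm * (Real.cos (ψ x) • (fun y => -U y) x - Real.sin (ψ x) • hodge (U x)) = -(Real.cos (ψ x) • (ηm * U x)) - Real.sin (ψ x) • (ηm * hodge (U x)) := by
      show ηm * (Real.cos (ψ x) • (-U x) - Real.sin (ψ x) • hodge (U x)) = _
      rw [Matrix.mul_sub, Matrix.mul_smul, Matrix.mul_smul, Matrix.mul_neg, smul_neg]
    have hw2 : ∀ z, codiff (fun y => hodge (F y)) x z = Real.exp (φ x) * ((Real.cos (ψ x) • (fun k => codiff (fun y => hodge (U y)) x (e k)) - Real.sin (ψ x) • (fun k => codiff U x (e k)) - (fun k => (fderiv ℝ φ x) (e k)) ᵥ* (Real.cos (ψ x) • (ηm * hodge (U x)) - Real.sin (ψ x) • (ηm * U x)) - (fun k => (fderiv ℝ ψ x) (e k)) ᵥ* (-(Real.cos (ψ x) • (ηm * U x)) - Real.sin (ψ x) • (ηm * hodge (U x))) : V4) ⬝ᵥ z) := by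
      intro z
      rw [hc2 z, codiff_neg, codiff_dot U, codiff_dot (fun y => hodge (U y)), icontr_vec,
        icontr_vec, hm4, hm5]
      simp only [sub_dotProduct, add_dotProduct, smul_dotProduct,
        neg_dotProduct, smul_eq_mul]
      try ring
    have hcs : Real.cos (ψ x) ^ 2 + Real.sin (ψ x) ^ 2 = 1 := Real.cos_sq_add_sin_sq (ψ x)
    have hAA := identAA hsk ht1
    have hAB := identAB hsk ht2
    have hBA := identBA hsk ht2
    have halg := rainich_alg (ηm * U x) (ηm * hodge (U x)) (fun k => (fderiv ℝ φ x) (e k)) (fun k => (fderiv ℝ ψ x) (e k)) (fun k => codiff U x (e k)) (fun k => codiff (fun y => hodge (U y)) x (e k)) (Real.cos (ψ x)) (Real.sin (ψ x)) hcs hAA hAB hBA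
    constructor
    · intro h
      have hv1 : (Real.cos (ψ x) • (fun k => codiff U x (e k)) + Real.sin (ψ x) • (fun k => codiff (fun y => hodge (U y)) x (e k)) - (fun k => (fderiv ℝ φ x) (e k)) ᵥ* (Real.cos (ψ x) • (ηm * U x) + Real.sin (ψ x) • (ηm * hodge (U x))) - (fun k => (fderiv ℝ ψ x) (e k)) ᵥ* (Real.cos (ψ x) • (ηm * hodge (U x)) - Real.sin (ψ x) • (ηm * U x)) : V4) = 0 := by
        funext k
        have h0 := (h (e k)).1
        rw [hw1 (e k), dot_single] at h0
        simpa using (mul_eq_zero.mp h0).resolve_left (Real.exp_ne_zero _)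
      have hv2 : (Real.cos (ψ x) • (fun k => codiff (fun y => hodge (U y)) x (e k)) - Real.sin (ψ x) • (fun k => codiff U x (e k)) - (fun k => (fderiv ℝ φ x) (e k)) ᵥ* (Real.cos (ψ x) • (ηm * hodge (U x)) - Real.sin (ψ x) • (ηm * U x)) - (fun k => (fderiv ℝ ψ x) (e k)) ᵥ* (-(Real.cos (ψ x) • (ηm * U x)) - Real.sin (ψ x) • (ηm * hodge (U x))) : V4) = 0 := by
        funext k
        have h0 := (h (e k)).2
        rw [hw2 (e k), dot_single] at h0
        simpa using (mul_eq_zero.mp h0).resolve_left (Real.exp_ne_zero _)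
      rw [sub_sub, sub_eq_zero] at hv1 hv2
      obtain ⟨hp, hq⟩ := halg.mp ⟨hv1, hv2⟩
      intro z
      constructor
      · rw [clm_dot (fderiv ℝ φ x) z, icontr_vec, icontr_vec, hp]
        exact sub_dotProduct _ _ _
      · rw [clm_dot (fderiv ℝ ψ x) z, icontr_vec, icontr_vec, hq]
        simp [sub_dotProduct, neg_dotProduct]
    · intro h
      have hp : (fun k => (fderiv ℝ φ x) (e k)) = (fun k => codiff U x (e k)) ᵥ* (ηm * U x) - (fun k => codiff (fun y => hodge (U y)) x (e k)) ᵥ* (ηm * hodge (U x)) := by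
        funext k
        have h0 := (h (e k)).1
        rw [icontr_vec, icontr_vec, dot_single, dot_single] at h0
        simpa using h0
      have hq : (fun k => (fderiv ℝ ψ x) (e k)) = -((fun k => codiff U x (e k)) ᵥ* (ηm * hodge (U x))) - (fun k => codiff (fun y => hodge (U y)) x (e k)) ᵥ* (ηm * U x) := by
        funext k
        have h0 := (h (e k)).2
        rw [icontr_vec, icontr_vec, dot_single, dot_single] at h0
        simpa using h0
      obtain ⟨hE1, hE2⟩ := halg.mpr ⟨hp, hq⟩
      intro z
      constructor
      · rw [hw1 z, show (Real.cos (ψ x) • (fun k => codiff U x (e k)) + Real.sin (ψ x) • (fun k => codiff (fun y => hodge (U y)) x (e k)) - (fun k => (fderiv ℝ φ x) (e k)) ᵥ* (Real.cos (ψ x) • (ηm * U x) + Real.sin (ψ x) • (ηm * hodge (U x))) - (fun k => (fderiv ℝ ψ x) (e k)) ᵥ* (Real.cos (ψ x) • (ηm * hodge (U x)) - Real.sin (ψ x) • (ηm * U x)) : V4) = 0 by rw [sub_sub, sub_eq_zero]; exact hE1]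
        simp
      · rw [hw2 z, show (Real.cos (ψ x) • (fun k => codiff (fun y => hodge (U y)) x (e k)) - Real.sin (ψ x) • (fun k => codiff U x (e k)) - (fun k => (fderiv ℝ φ x) (e k)) ᵥ* (Real.cos (ψ x) • (ηm * hodge (U x)) - Real.sin (ψ x) • (ηm * U x)) - (fun k => (fderiv ℝ ψ x) (e k)) ᵥ* (-(Real.cos (ψ x) • (ηm * U x)) - Real.sin (ψ x) • (ηm * hodge (U x))) : V4) = 0 by rw [sub_sub, sub_eq_zero]; exact hE2]
        simp
  constructor
  · intro h x hx
    exact (key x hx).mp (h x hx)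
  · intro h x hx
    exact (key x hx).mpr (h x hx)
end
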